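/- arXiv:1009.3645 — 4 statements merged into one kernel-verified Lean document; each statement's English description precedes it below -/
import Mathlib

section
/- For every natural number n ≥ 1, the coefficient of X^n in the polynomial ∏_{j=2}^{n} (1 − X^j) over ℤ equals −f(n). -/
def e (n : ℕ) : ℤ :=
  ∑ k ∈ Finset.range (2 * n + 2),
    if 2 * n = 3 * k ^ 2 - k ∨ 2 * n = 3 * k ^ 2 + k then (-1) ^ (k + 1) else 0

def f (n : ℕ) : ℤ := ∑ k ∈ Finset.range (n + 1), e k

open Finset
open Finset

def sigmaC (S : Finset ℕ) (M : ℕ) : ℕ :=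
  Nat.findGreatest (fun r => Icc (M + 1 - r) M ⊆ S) (M + 1)

section SigmaLemmas
variable {S : Finset ℕ} (h : S.Nonempty)

lemma le_sigmaC {r : ℕ} (hr : r ≤ S.max' h + 1)
    (hc : Icc (S.max' h + 1 - r) (S.max' h) ⊆ S) : r ≤ sigmaC S (S.max' h) :=
  Nat.le_findGreatest hr hc

lemma one_le_sigmaC : 1 ≤ sigmaC S (S.max' h) := by
  apply le_sigmaC h (by omega)
  intro x hx
  simp only [mem_Icc] at hx
  have : x = S.max' h := by omega
  exact this ▸ S.max'_mem h

lemma sigmaC_chain : Icc (S.max' h + 1 - sigmaC S (S.max' h)) (S.max' h) ⊆ S := by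
  have hP : Icc (S.max' h + 1 - 1) (S.max' h) ⊆ S := by
    intro x hx
    simp only [mem_Icc] at hx
    have : x = S.max' h := by omega
    exact this ▸ S.max'_mem h
  exact Nat.findGreatest_spec (P := fun r => Icc (S.max' h + 1 - r) (S.max' h) ⊆ S)
    (m := 1) (by omega) hP

lemma sigmaC_le (h0 : 0 ∉ S) : sigmaC S (S.max' h) ≤ S.max' h := by
  by_contra hc
  push_neg at hc
  have h1 : sigmaC S (S.max' h) ≤ S.max' h + 1 := Nat.findGreatest_le _
  have hσ : sigmaC S (S.max' h) = S.max' h + 1 := by omega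
  have := sigmaC_chain h (S := S)
  rw [hσ] at this
  exact h0 (this (by simp))

lemma sigmaC_notMem (h0 : 0 ∉ S) : S.max' h - sigmaC S (S.max' h) ∉ S := by
  have hle : sigmaC S (S.max' h) ≤ S.max' h := sigmaC_le h h0
  have hch := sigmaC_chain h (S := S)
  have h1 : ¬ (Icc (S.max' h + 1 - (sigmaC S (S.max' h) + 1)) (S.max' h) ⊆ S) :=
    Nat.findGreatest_is_greatest (P := fun r => Icc (S.max' h + 1 - r) (S.max' h) ⊆ S)
      (Nat.lt_succ_self _) (by omega)
  intro hmem
  apply h1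
  intro x hx
  simp only [mem_Icc] at hx
  rcases Nat.eq_or_lt_of_le hx.1 with heq | hlt
  · have : x = S.max' h - sigmaC S (S.max' h) := by omega
    exact this ▸ hmem
  · exact hch (by simp only [mem_Icc]; omega)

end SigmaLemmas

/-- staircase partitions: fixed points of Franklin's involution -/
def IsStair (S : Finset ℕ) : Prop :=
  ∃ k, 1 ≤ k ∧ (S = Icc k (2 * k - 1) ∨ S = Icc (k + 1) (2 * k))

noncomputable instance : DecidablePred IsStair := fun _ => Classical.dec _

/-- Franklin's involution -/
noncomputable def g (S : Finset ℕ) : Finset ℕ :=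
  if h : S.Nonempty then
    if S.min' h ≤ sigmaC S (S.max' h) then
      insert (S.max' h + 1) ((S.erase (S.min' h)).erase (S.max' h + 1 - S.min' h))
    else
      insert (sigmaC S (S.max' h))
        (insert (S.max' h - sigmaC S (S.max' h)) (S.erase (S.max' h)))
  else ∅

lemma g_eq_A {S : Finset ℕ} (h : S.Nonempty) (hle : S.min' h ≤ sigmaC S (S.max' h)) :
    g S = insert (S.max' h + 1) ((S.erase (S.min' h)).erase (S.max' h + 1 - S.min' h)) := by
  rw [g, dif_pos h, if_pos hle]

lemma g_eq_B {S : Finset ℕ} (h : S.Nonempty) (hgt : ¬ S.min' h ≤ sigmaC S (S.max' h)) :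
    g S = insert (sigmaC S (S.max' h))
        (insert (S.max' h - sigmaC S (S.max' h)) (S.erase (S.max' h))) := by
  rw [g, dif_pos h, if_neg hgt]

-- min'/max' of Icc
lemma Icc_min' {a b : ℕ} (hab : a ≤ b) (h : (Icc a b).Nonempty) : (Icc a b).min' h = a :=
  le_antisymm (min'_le _ _ (by simp [hab])) (le_min' _ _ _ (fun x hx => (mem_Icc.1 hx).1))

lemma Icc_max' {a b : ℕ} (hab : a ≤ b) (h : (Icc a b).Nonempty) : (Icc a b).max' h = b :=
  le_antisymm (max'_le _ _ _ (fun x hx => (mem_Icc.1 hx).2)) (le_max' _ _ (by simp [hab]))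

lemma stair1_sigma {k : ℕ} (hk : 1 ≤ k) (h : (Icc k (2 * k - 1)).Nonempty) :
    sigmaC (Icc k (2 * k - 1)) (2 * k - 1) = k := by
  have h0 : (0 : ℕ) ∉ Icc k (2 * k - 1) := by simp [mem_Icc]; omega
  have hmax := Icc_max' (by omega : k ≤ 2 * k - 1) h
  refine le_antisymm ?_ ?_
  · have := sigmaC_le h h0
    rw [hmax] at this
    by_contra hc
    push_neg at hc
    have hch := sigmaC_chain h
    rw [hmax] at hch
    have : 2 * k - 1 + 1 - sigmaC (Icc k (2 * k - 1)) (2 * k - 1) ∈ Icc k (2 * k - 1) :=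
      hch (by simp only [mem_Icc]; omega)
    simp only [mem_Icc] at this
    omega
  · have := le_sigmaC h (r := k) (by rw [hmax]; omega)
      (by rw [hmax]; intro x hx; simp only [mem_Icc] at hx ⊢; omega)
    rwa [hmax] at this

lemma stair2_sigma {k : ℕ} (hk : 1 ≤ k) (h : (Icc (k + 1) (2 * k)).Nonempty) :
    sigmaC (Icc (k + 1) (2 * k)) (2 * k) = k := by
  have h0 : (0 : ℕ) ∉ Icc (k + 1) (2 * k) := by simp [mem_Icc]
  have hmax := Icc_max' (by omega : k + 1 ≤ 2 * k) h
  refine le_antisymm ?_ ?_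
  · have := sigmaC_le h h0
    rw [hmax] at this
    by_contra hc
    push_neg at hc
    have hch := sigmaC_chain h
    rw [hmax] at hch
    have : 2 * k + 1 - sigmaC (Icc (k + 1) (2 * k)) (2 * k) ∈ Icc (k + 1) (2 * k) :=
      hch (by simp only [mem_Icc]; omega)
    simp only [mem_Icc] at this
    omega
  · have := le_sigmaC h (r := k) (by rw [hmax]; omega)
      (by rw [hmax]; intro x hx; simp only [mem_Icc] at hx ⊢; omega)
    rwa [hmax] at this


lemma min'_eq_of_eq_Icc {T : Finset ℕ} (hne : T.Nonempty) {a b : ℕ} (hab : a ≤ b)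
    (hcase : T = Icc a b) : T.min' hne = a := by
  subst hcase; exact Icc_min' hab _

lemma max'_eq_of_eq_Icc {T : Finset ℕ} (hne : T.Nonempty) {a b : ℕ} (hab : a ≤ b)
    (hcase : T = Icc a b) : T.max' hne = b := by
  subst hcase; exact Icc_max' hab _

lemma sigma_eq_of_eq_stair1 {T : Finset ℕ} (hne : T.Nonempty) {k : ℕ} (hk : 1 ≤ k)
    (hcase : T = Icc k (2 * k - 1)) : sigmaC T (T.max' hne) = k := by
  subst hcase
  rw [Icc_max' (by omega) hne]
  exact stair1_sigma hk hne

lemma sigma_eq_of_eq_stair2 {T : Finset ℕ} (hne : T.Nonempty) {k : ℕ} (hk : 1 ≤ k)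
    (hcase : T = Icc (k + 1) (2 * k)) : sigmaC T (T.max' hne) = k := by
  subst hcase
  rw [Icc_max' (by omega) hne]
  exact stair2_sigma hk hne

section Steps

lemma stepA {S : Finset ℕ} (h : S.Nonempty) (h0 : 0 ∉ S) (hns : ¬ IsStair S)
    (hA : S.min' h ≤ sigmaC S (S.max' h)) :
    (g S).Nonempty ∧ 0 ∉ g S ∧ ¬ IsStair (g S) ∧ (∑ i ∈ g S, i) = (∑ i ∈ S, i) ∧
      g (g S) = S ∧ S.card = (g S).card + 1 := by
  set M := S.max' h with hMdef
  set s := S.min' h with hsdef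
  set σ := sigmaC S M with hσdef
  have hMmem : M ∈ S := S.max'_mem h
  have hsmem : s ∈ S := S.min'_mem h
  have hsle : ∀ x ∈ S, s ≤ x := fun x hx => min'_le _ _ hx
  have hMge : ∀ x ∈ S, x ≤ M := fun x hx => le_max' _ _ hx
  have hσ1 : 1 ≤ σ := one_le_sigmaC h
  have hσM : σ ≤ M := sigmaC_le h h0
  have hch : Icc (M + 1 - σ) M ⊆ S := sigmaC_chain h
  have hnm : M - σ ∉ S := sigmaC_notMem h h0
  have hs1 : 1 ≤ s := by rcases Nat.eq_zero_or_pos s with h' | h' ; · exact absurd (h' ▸ hsmem) h0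
                         · exact h'
  have hsM : s ≤ M := hMge s hsmem
  have hbot : s ≤ M + 1 - σ := hsle _ (hch (by simp only [mem_Icc]; omega))
  -- key: 2 * s ≤ M
  have h2s : 2 * s ≤ M := by
    by_contra hc
    push_neg at hc
    have hσs : σ = s := by omega
    have hM2s : M = 2 * s - 1 := by omega
    apply hns
    refine ⟨s, hs1, Or.inl ?_⟩
    rw [← hM2s]
    apply Subset.antisymm
    · intro x hx; simp only [mem_Icc]; exact ⟨hsle x hx, hMge x hx⟩
    · have : Icc s M = Icc (M + 1 - σ) M := by congr 1; omega
      rw [this]; exact hch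
  have hb : M + 1 - s ∈ S := hch (by simp only [mem_Icc]; omega)
  have hMnot : M + 1 ∉ S := fun hx => by have := hMge _ hx; omega
  set T := insert (M + 1) ((S.erase s).erase (M + 1 - s)) with hTdef
  have hgS : g S = T := g_eq_A h hA
  have e1 : M + 1 - s ∈ S.erase s := mem_erase.2 ⟨by omega, hb⟩
  have e2 : M + 1 ∉ (S.erase s).erase (M + 1 - s) := by
    intro hx
    exact hMnot (mem_of_mem_erase (mem_of_mem_erase hx))
  have hne' : T.Nonempty := ⟨M + 1, mem_insert_self _ _⟩
  have hmemT : ∀ x, x ∈ T ↔ (x = M + 1 ∨ (x ∈ S ∧ x ≠ s ∧ x ≠ M + 1 - s)) := by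
    intro x
    simp only [hTdef, mem_insert, mem_erase]
    tauto
  have h0' : 0 ∉ T := by
    rw [hmemT]; push_neg
    exact ⟨by omega, fun hx => absurd hx h0⟩
  have hsum : (∑ i ∈ T, i) = ∑ i ∈ S, i := by
    have f1 : (∑ x ∈ (S.erase s).erase (M + 1 - s), x) + (M + 1 - s) = ∑ x ∈ S.erase s, x :=
      sum_erase_add _ _ e1
    have f2 : (∑ x ∈ S.erase s, x) + s = ∑ x ∈ S, x := sum_erase_add _ _ hsmem
    rw [hTdef, sum_insert e2]
    omega
  have hcard2 : 2 ≤ S.card := one_lt_card.2 ⟨s, hsmem, M + 1 - s, hb, by omega⟩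
  have hcard : S.card = T.card + 1 := by
    rw [hTdef, card_insert_of_notMem e2, card_erase_of_mem e1, card_erase_of_mem hsmem]
    omega
  have hmax' : T.max' hne' = M + 1 := by
    refine le_antisymm (max'_le _ _ _ ?_) (le_max' _ _ (mem_insert_self _ _))
    intro x hx
    rw [hmemT] at hx
    rcases hx with rfl | ⟨hx, -, -⟩
    · exact le_refl _
    · exact le_trans (hMge x hx) (by omega)
  have hmin' : s < T.min' hne' := by
    have hm := T.min'_mem hne'
    rw [hmemT] at hm
    rcases hm with he | ⟨hx, hne, -⟩
    · omega
    · exact lt_of_le_of_ne (hsle _ hx) (Ne.symm hne)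
  have hσ'le : sigmaC T (T.max' hne') ≤ M + 1 := by
    have := sigmaC_le hne' h0'
    omega
  have hσ' : sigmaC T (T.max' hne') = s := by
    refine le_antisymm ?_ ?_
    · by_contra hc
      push_neg at hc
      have hch' := sigmaC_chain hne' (S := T)
      have : M + 1 - s ∈ T := hch' (by simp only [mem_Icc]; omega)
      rw [hmemT] at this
      rcases this with he | ⟨-, -, hne⟩
      · omega
      · exact hne rfl
    · apply le_sigmaC hne' (by omega)
      rw [hmax']
      intro x hx
      simp only [mem_Icc] at hx
      rw [hmemT]
      rcases Nat.eq_or_lt_of_le hx.2 with he | hlt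
      · exact Or.inl he
      · refine Or.inr ⟨hch (by simp only [mem_Icc]; omega), by omega, by omega⟩
  have hnstair' : ¬ IsStair T := by
    rintro ⟨k, hk1, hcase | hcase⟩
    · have hmin : T.min' hne' = k := min'_eq_of_eq_Icc hne' (by omega) hcase
      have hsig : sigmaC T (T.max' hne') = k := sigma_eq_of_eq_stair1 hne' hk1 hcase
      omega
    · have hmin : T.min' hne' = k + 1 := min'_eq_of_eq_Icc hne' (by omega) hcase
      have hmx : T.max' hne' = 2 * k := max'_eq_of_eq_Icc hne' (by omega) hcase
      have hsig : sigmaC T (T.max' hne') = k := sigma_eq_of_eq_stair2 hne' hk1 hcase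
      -- σ' = s = k and max' = M+1 = 2k gives M = 2s - 1, contradicting 2s ≤ M
      omega
  have hinv : g T = S := by
    have hgt : ¬ T.min' hne' ≤ sigmaC T (T.max' hne') := by omega
    rw [g_eq_B hne' hgt, hσ', hmax']
    have r1 : T.erase (M + 1) = (S.erase s).erase (M + 1 - s) := erase_insert e2
    rw [r1]
    rw [insert_erase e1, insert_erase hsmem]
  refine ⟨by rw [hgS]; exact hne', by rw [hgS]; exact h0', by rw [hgS]; exact hnstair',
    by rw [hgS]; exact hsum, by rw [hgS, hinv], by rw [hgS]; exact hcard⟩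

end Steps

lemma stepB {S : Finset ℕ} (h : S.Nonempty) (h0 : 0 ∉ S) (hns : ¬ IsStair S)
    (hB : ¬ S.min' h ≤ sigmaC S (S.max' h)) :
    (g S).Nonempty ∧ 0 ∉ g S ∧ ¬ IsStair (g S) ∧ (∑ i ∈ g S, i) = (∑ i ∈ S, i) ∧
      g (g S) = S ∧ (g S).card = S.card + 1 := by
  set M := S.max' h with hMdef
  set s := S.min' h with hsdef
  set σ := sigmaC S M with hσdef
  have hMmem : M ∈ S := S.max'_mem h
  have hsmem : s ∈ S := S.min'_mem h
  have hsle : ∀ x ∈ S, s ≤ x := fun x hx => min'_le _ _ hx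
  have hMge : ∀ x ∈ S, x ≤ M := fun x hx => le_max' _ _ hx
  have hσ1 : 1 ≤ σ := one_le_sigmaC h
  have hσM : σ ≤ M := sigmaC_le h h0
  have hch : Icc (M + 1 - σ) M ⊆ S := sigmaC_chain h
  have hnm : M - σ ∉ S := sigmaC_notMem h h0
  have hs1 : 1 ≤ s := by
    rcases Nat.eq_zero_or_pos s with h' | h'
    · exact absurd (h' ▸ hsmem) h0
    · exact h'
  have hsM : s ≤ M := hMge s hsmem
  have hbot : s ≤ M + 1 - σ := hsle _ (hch (by simp only [mem_Icc]; omega))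
  have hσs : σ < s := by omega
  -- key : 2 * σ < M
  have h2σ : 2 * σ < M := by
    have h2σ' : 2 * σ ≤ M := by omega
    rcases Nat.eq_or_lt_of_le h2σ' with he | hlt
    · exfalso
      have hss : s = σ + 1 := by omega
      apply hns
      refine ⟨σ, hσ1, Or.inr ?_⟩
      apply Subset.antisymm
      · intro x hx; simp only [mem_Icc]
        exact ⟨hss ▸ hsle x hx, he ▸ hMge x hx⟩
      · have : Icc (σ + 1) (2 * σ) = Icc (M + 1 - σ) M := by congr 1 <;> omega
        rw [this]; exact hch
    · exact hlt
  have hσnot : σ ∉ S := fun hx => by have := hsle _ hx; omega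
  have e1 : M - σ ∉ S.erase M := fun hx => hnm (mem_of_mem_erase hx)
  have e2 : σ ∉ insert (M - σ) (S.erase M) := by
    intro hx
    rcases mem_insert.1 hx with he | hx'
    · omega
    · exact hσnot (mem_of_mem_erase hx')
  set T := insert σ (insert (M - σ) (S.erase M)) with hTdef
  have hgS : g S = T := g_eq_B h hB
  have hne' : T.Nonempty := ⟨σ, mem_insert_self _ _⟩
  have hmemT : ∀ x, x ∈ T ↔ (x = σ ∨ x = M - σ ∨ (x ≠ M ∧ x ∈ S)) := by
    intro x
    simp only [hTdef, mem_insert, mem_erase]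
  have h0' : 0 ∉ T := by
    rw [hmemT]; push_neg
    exact ⟨by omega, by omega, fun _ => h0⟩
  have hsum : (∑ i ∈ T, i) = ∑ i ∈ S, i := by
    have f2 : (∑ x ∈ S.erase M, x) + M = ∑ x ∈ S, x := sum_erase_add _ _ hMmem
    rw [hTdef, sum_insert e2, sum_insert e1]
    omega
  have hcard : T.card = S.card + 1 := by
    have h1 : 1 ≤ S.card := card_pos.2 h
    rw [hTdef, card_insert_of_notMem e2, card_insert_of_notMem e1, card_erase_of_mem hMmem]
    omega
  have hmax' : T.max' hne' = M - 1 := by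
    refine le_antisymm (max'_le _ _ _ ?_) (le_max' _ _ ?_)
    · intro x hx
      rw [hmemT] at hx
      rcases hx with rfl | rfl | ⟨hne, hx⟩
      · omega
      · omega
      · have := hMge x hx; omega
    · rw [hmemT]
      rcases Nat.lt_or_ge 1 σ with h' | h'
      · refine Or.inr (Or.inr ⟨by omega, hch (by simp only [mem_Icc]; omega)⟩)
      · exact Or.inr (Or.inl (by omega))
  have hmin' : T.min' hne' = σ := by
    refine le_antisymm (min'_le _ _ (mem_insert_self _ _)) (le_min' _ _ _ ?_)
    intro x hx
    rw [hmemT] at hx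
    rcases hx with rfl | rfl | ⟨-, hx⟩
    · exact le_refl _
    · omega
    · have := hsle x hx; omega
  have hσ'ge : σ ≤ sigmaC T (T.max' hne') := by
    apply le_sigmaC hne' (by omega)
    intro x hx
    simp only [mem_Icc] at hx
    rw [hmemT]
    rcases Nat.eq_or_lt_of_le hx.1 with he | hlt
    · exact Or.inr (Or.inl (by omega))
    · exact Or.inr (Or.inr ⟨by omega, hch (by simp only [mem_Icc]; omega)⟩)
  have hnstair' : ¬ IsStair T := by
    rintro ⟨k, hk1, hcase | hcase⟩
    · have hmin : T.min' hne' = k := min'_eq_of_eq_Icc hne' (by omega) hcase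
      have hmx : T.max' hne' = 2 * k - 1 := max'_eq_of_eq_Icc hne' (by omega) hcase
      omega
    · have hmin : T.min' hne' = k + 1 := min'_eq_of_eq_Icc hne' (by omega) hcase
      have hsig : sigmaC T (T.max' hne') = k := sigma_eq_of_eq_stair2 hne' hk1 hcase
      omega
  have hinv : g T = S := by
    have hle' : T.min' hne' ≤ sigmaC T (T.max' hne') := by omega
    rw [g_eq_A hne' hle', hmin', hmax']
    have harg : M - 1 + 1 - σ = M - σ := by omega
    have htop : M - 1 + 1 = M := by omega
    rw [harg, htop]
    have r1 : T.erase σ = insert (M - σ) (S.erase M) := erase_insert e2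
    rw [r1, erase_insert e1, insert_erase hMmem]
  exact ⟨by rw [hgS]; exact hne', by rw [hgS]; exact h0', by rw [hgS]; exact hnstair',
    by rw [hgS]; exact hsum, by rw [hgS, hinv], by rw [hgS]; exact hcard⟩


theorem g_props {S : Finset ℕ} (h : S.Nonempty) (h0 : 0 ∉ S) (hns : ¬ IsStair S) :
    (g S).Nonempty ∧ 0 ∉ g S ∧ ¬ IsStair (g S) ∧ (∑ i ∈ g S, i) = (∑ i ∈ S, i) ∧
      g (g S) = S ∧ ((-1:ℤ) ^ (g S).card = -(-1:ℤ) ^ S.card) := by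
  by_cases hA : S.min' h ≤ sigmaC S (S.max' h)
  · obtain ⟨a, b, c, d, e, f⟩ := stepA h h0 hns hA
    refine ⟨a, b, c, d, e, ?_⟩
    rw [f, pow_succ]; ring
  · obtain ⟨a, b, c, d, e, f⟩ := stepB h h0 hns hA
    refine ⟨a, b, c, d, e, ?_⟩
    rw [f, pow_succ]; ring

def pset (n : ℕ) : Finset (Finset ℕ) :=
  (Icc 1 n).powerset.filter (fun S => ∑ i ∈ S, i = n)

lemma mem_pset {n : ℕ} {S : Finset ℕ} : S ∈ pset n ↔ S ⊆ Icc 1 n ∧ ∑ i ∈ S, i = n := by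
  simp [pset]

lemma subset_Icc_of {n : ℕ} {S : Finset ℕ} (h0 : 0 ∉ S) (hsum : ∑ i ∈ S, i = n) :
    S ⊆ Icc 1 n := by
  intro x hx
  simp only [mem_Icc]
  refine ⟨Nat.pos_of_ne_zero (fun he => h0 (he ▸ hx)), ?_⟩
  calc x ≤ ∑ i ∈ S, i := single_le_sum (f := fun i => i) (fun i _ => Nat.zero_le i) hx
    _ = n := hsum

lemma pset_facts {n : ℕ} (hn : 1 ≤ n) {S : Finset ℕ}
    (hS : S ∈ (pset n).filter (fun S => ¬ IsStair S)) :
    S.Nonempty ∧ 0 ∉ S ∧ ¬ IsStair S := by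
  rw [mem_filter, mem_pset] at hS
  obtain ⟨⟨hsub, hsum⟩, hns⟩ := hS
  have h0 : 0 ∉ S := fun hx => by simpa using (mem_Icc.1 (hsub hx)).1
  have hne : S.Nonempty := by
    rcases S.eq_empty_or_nonempty with rfl | h'
    · simp at hsum; omega
    · exact h'
  exact ⟨hne, h0, hns⟩

lemma sum_nonstair (n : ℕ) (hn : 1 ≤ n) :
    ∑ S ∈ (pset n).filter (fun S => ¬ IsStair S), (-1:ℤ) ^ S.card = 0 := by
  apply Finset.sum_involution (fun S _ => g S)
  · intro S hS
    obtain ⟨hne, h0, hns⟩ := pset_facts hn hS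
    obtain ⟨-, -, -, -, -, hsign⟩ := g_props hne h0 hns
    rw [hsign]; ring
  · intro S hS _ heq
    obtain ⟨hne, h0, hns⟩ := pset_facts hn hS
    obtain ⟨-, -, -, -, -, hsign⟩ := g_props hne h0 hns
    rw [heq] at hsign
    have : ((-1:ℤ)) ^ S.card ≠ 0 := pow_ne_zero _ (by norm_num)
    omega
  · intro S hS
    obtain ⟨hne, h0, hns⟩ := pset_facts hn hS
    obtain ⟨hne', h0', hns', hsum', -, -⟩ := g_props hne h0 hns
    rw [mem_filter, mem_pset] at hS ⊢
    obtain ⟨⟨-, hsum⟩, -⟩ := hS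
    have hs2 : ∑ i ∈ g S, i = n := by rw [hsum', hsum]
    exact ⟨⟨subset_Icc_of h0' hs2, hs2⟩, hns'⟩
  · intro S hS
    obtain ⟨hne, h0, hns⟩ := pset_facts hn hS
    obtain ⟨-, -, -, -, hgg, -⟩ := g_props hne h0 hns
    exact hgg

lemma stair1_sum {k : ℕ} (hk : 1 ≤ k) : 2 * (∑ i ∈ Icc k (2 * k - 1), i) = 3 * k ^ 2 - k := by
  have h1 : Icc k (2 * k - 1) = Ico k (2 * k) := by
    rw [← Finset.Ico_add_one_right_eq_Icc]; congr 1; omega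
  rw [h1, Finset.sum_Ico_eq_sum_range]
  rw [Finset.sum_add_distrib, Finset.sum_const, card_range, smul_eq_mul]
  have h2 : (∑ i ∈ range (2 * k - k), i) * 2 = (2 * k - k) * (2 * k - k - 1) :=
    Finset.sum_range_id_mul_two _
  have h3 : 2 * k - k = k := by omega
  rw [h3] at h2 ⊢
  have hk3 : k ≤ 3 * k ^ 2 := by nlinarith
  zify [hk3, hk]
  zify [hk] at h2
  nlinarith [h2]

lemma stair2_sum {k : ℕ} (hk : 1 ≤ k) : 2 * (∑ i ∈ Icc (k + 1) (2 * k), i) = 3 * k ^ 2 + k := by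
  have h1 : Icc (k + 1) (2 * k) = Ico (k + 1) (2 * k + 1) := by
    rw [← Finset.Ico_add_one_right_eq_Icc]
  rw [h1, Finset.sum_Ico_eq_sum_range]
  rw [Finset.sum_add_distrib, Finset.sum_const, card_range, smul_eq_mul]
  have h3 : 2 * k + 1 - (k + 1) = k := by omega
  have h2 : (∑ i ∈ range k, i) * 2 = k * (k - 1) :=
    Finset.sum_range_id_mul_two _
  rw [h3]
  zify [hk] at h2
  zify
  nlinarith [h2]

lemma pent_pos {n k : ℕ} (hn : 1 ≤ n)
    (h : 2 * n = 3 * k ^ 2 - k ∨ 2 * n = 3 * k ^ 2 + k) : 1 ≤ k := by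
  rcases Nat.eq_zero_or_pos k with rfl | h'
  · simp at h; omega
  · exact h'

lemma pent_bound {n k : ℕ} (hk : 1 ≤ k)
    (h : 2 * n = 3 * k ^ 2 - k ∨ 2 * n = 3 * k ^ 2 + k) : k ≤ n := by
  have hk3 : k ≤ 3 * k ^ 2 := by nlinarith
  rcases h with h | h
  · have : 2 * n + k = 3 * k ^ 2 := by omega
    nlinarith
  · nlinarith

lemma not_both {n k : ℕ} (hk : 1 ≤ k) (h2 : 2 * n = 3 * k ^ 2 + k) :
    ¬ (2 * n = 3 * k ^ 2 - k) := by
  intro h1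
  have hk3 : k ≤ 3 * k ^ 2 := by nlinarith
  omega

lemma sum_stair (n : ℕ) (hn : 1 ≤ n) :
    ∑ S ∈ (pset n).filter IsStair, (-1:ℤ) ^ S.card
      = ∑ k ∈ Finset.range (2 * n + 2),
          if 2 * n = 3 * k ^ 2 - k ∨ 2 * n = 3 * k ^ 2 + k then (-1:ℤ) ^ k else 0 := by
  rw [← Finset.sum_filter]
  apply Finset.sum_nbij' (i := fun S => S.card)
    (j := fun k => if 2 * n = 3 * k ^ 2 - k then Icc k (2 * k - 1) else Icc (k + 1) (2 * k))
  · -- i maps into target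
    intro S hS
    rw [mem_filter, mem_pset] at hS
    obtain ⟨⟨hsub, hsum⟩, k, hk1, hcase | hcase⟩ := hS
    · have hcard : S.card = k := by rw [hcase, Nat.card_Icc]; omega
      have h2n : 2 * n = 3 * k ^ 2 - k := by
        rw [← hsum, hcase]; exact (stair1_sum hk1).symm ▸ rfl
      rw [mem_filter, mem_range, hcard]
      have := pent_bound hk1 (Or.inl h2n)
      exact ⟨by omega, Or.inl h2n⟩
    · have hcard : S.card = k := by rw [hcase, Nat.card_Icc]; omega
      have h2n : 2 * n = 3 * k ^ 2 + k := by
        rw [← hsum, hcase]; exact (stair2_sum hk1).symm ▸ rfl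
      rw [mem_filter, mem_range, hcard]
      have := pent_bound hk1 (Or.inr h2n)
      exact ⟨by omega, Or.inr h2n⟩
  · -- j maps into source
    intro k hk
    rw [mem_filter, mem_range] at hk
    obtain ⟨-, hcond⟩ := hk
    have hk1 : 1 ≤ k := pent_pos hn hcond
    rw [mem_filter, mem_pset]
    by_cases h1 : 2 * n = 3 * k ^ 2 - k
    · rw [if_pos h1]
      have hsum : ∑ i ∈ Icc k (2 * k - 1), i = n := by
        have := stair1_sum hk1
        rw [← h1] at this
        omega
      have h0 : (0:ℕ) ∉ Icc k (2 * k - 1) := by simp [mem_Icc]; omega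
      exact ⟨⟨subset_Icc_of h0 hsum, hsum⟩, k, hk1, Or.inl rfl⟩
    · rw [if_neg h1]
      have h2 : 2 * n = 3 * k ^ 2 + k := by tauto
      have hsum : ∑ i ∈ Icc (k + 1) (2 * k), i = n := by
        have := stair2_sum hk1
        rw [← h2] at this
        omega
      have h0 : (0:ℕ) ∉ Icc (k + 1) (2 * k) := by simp [mem_Icc]
      exact ⟨⟨subset_Icc_of h0 hsum, hsum⟩, k, hk1, Or.inr rfl⟩
  · -- left inverse
    intro S hS
    rw [mem_filter, mem_pset] at hS
    obtain ⟨⟨hsub, hsum⟩, k, hk1, hcase | hcase⟩ := hS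
    · have hcard : S.card = k := by rw [hcase, Nat.card_Icc]; omega
      have h2n : 2 * n = 3 * k ^ 2 - k := by
        rw [← hsum, hcase]; exact (stair1_sum hk1).symm ▸ rfl
      rw [hcard, if_pos h2n, hcase]
    · have hcard : S.card = k := by rw [hcase, Nat.card_Icc]; omega
      have h2n : 2 * n = 3 * k ^ 2 + k := by
        rw [← hsum, hcase]; exact (stair2_sum hk1).symm ▸ rfl
      rw [hcard, if_neg (not_both hk1 h2n), hcase]
  · -- right inverse
    intro k hk
    rw [mem_filter, mem_range] at hk
    obtain ⟨-, hcond⟩ := hk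
    have hk1 : 1 ≤ k := pent_pos hn hcond
    by_cases h1 : 2 * n = 3 * k ^ 2 - k
    · rw [if_pos h1, Nat.card_Icc]; omega
    · rw [if_neg h1, Nat.card_Icc]; omega
  · intro S _
    rfl


theorem franklin (n : ℕ) (hn : 1 ≤ n) :
    ∑ S ∈ pset n, (-1:ℤ) ^ S.card = - e n := by
  rw [← Finset.sum_filter_add_sum_filter_not (pset n) IsStair, sum_stair n hn,
    sum_nonstair n hn, add_zero]
  have he : e n = ∑ k ∈ Finset.range (2 * n + 2),
      if 2 * n = 3 * k ^ 2 - k ∨ 2 * n = 3 * k ^ 2 + k then (-1:ℤ) ^ (k + 1) else 0 := rfl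
  rw [he, ← Finset.sum_neg_distrib]
  refine Finset.sum_congr rfl fun k _ => ?_
  split
  · rw [pow_succ]; ring
  · ring

def dsum (m : ℕ) : ℤ :=
  ∑ S ∈ (Icc 2 m).powerset.filter (fun S => ∑ i ∈ S, i = m), (-1:ℤ) ^ S.card

lemma pset_split_nomem (n : ℕ) :
    (pset n).filter (fun S => ¬ (1 ∈ S)) = (Icc 2 n).powerset.filter (fun S => ∑ i ∈ S, i = n) := by
  ext S
  simp only [mem_filter, mem_pset, mem_powerset]
  constructor
  · rintro ⟨⟨hsub, hsum⟩, h1⟩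
    refine ⟨fun x hx => ?_, hsum⟩
    have := mem_Icc.1 (hsub hx)
    have hx1 : x ≠ 1 := fun he => h1 (he ▸ hx)
    simp only [mem_Icc]
    omega
  · rintro ⟨hsub, hsum⟩
    have h1 : 1 ∉ S := fun hx => by have := mem_Icc.1 (hsub hx); omega
    refine ⟨⟨fun x hx => ?_, hsum⟩, h1⟩
    have := mem_Icc.1 (hsub hx)
    simp only [mem_Icc]
    omega

lemma pset_split_mem (n : ℕ) (hn : 1 ≤ n) :
    ∑ S ∈ (pset n).filter (fun S => 1 ∈ S), (-1:ℤ) ^ S.card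
      = ∑ t ∈ (Icc 2 n).powerset.filter (fun t => ∑ i ∈ t, i = n - 1), (-((-1:ℤ) ^ t.card)) := by
  apply Finset.sum_nbij' (i := fun S => S.erase 1) (j := fun t => insert 1 t)
  · intro S hS
    rw [mem_filter, mem_pset] at hS
    obtain ⟨⟨hsub, hsum⟩, h1⟩ := hS
    rw [mem_filter, mem_powerset]
    have hsum' : (∑ x ∈ S.erase 1, x) + 1 = ∑ x ∈ S, x := sum_erase_add _ _ h1
    constructor
    · intro x hx
      have hxS := mem_of_mem_erase hx
      have := mem_Icc.1 (hsub hxS)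
      have hx1 : x ≠ 1 := ne_of_mem_erase hx
      simp only [mem_Icc]; omega
    · omega
  · intro t ht
    rw [mem_filter, mem_powerset] at ht
    obtain ⟨hsub, hsum⟩ := ht
    have h1 : 1 ∉ t := fun hx => by have := mem_Icc.1 (hsub hx); omega
    rw [mem_filter, mem_pset]
    refine ⟨⟨?_, ?_⟩, mem_insert_self _ _⟩
    · intro x hx
      rcases mem_insert.1 hx with rfl | hx'
      · simp only [mem_Icc]; omega
      · have := mem_Icc.1 (hsub hx'); simp only [mem_Icc]; omega
    · rw [sum_insert h1]; omega
  · intro S hS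
    rw [mem_filter] at hS
    exact insert_erase hS.2
  · intro t ht
    rw [mem_filter, mem_powerset] at ht
    have h1 : 1 ∉ t := fun hx => by have := mem_Icc.1 (ht.1 hx); omega
    exact erase_insert h1
  · intro S hS
    rw [mem_filter] at hS
    have h1 := hS.2
    have hc : S.card = (S.erase 1).card + 1 := by
      rw [card_erase_of_mem h1]
      have : 1 ≤ S.card := card_pos.2 ⟨1, h1⟩
      omega
    rw [hc, pow_succ]; ring

lemma shrink (n : ℕ) (hn : 2 ≤ n) :
    (Icc 2 n).powerset.filter (fun t => ∑ i ∈ t, i = n - 1)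
      = (Icc 2 (n-1)).powerset.filter (fun t => ∑ i ∈ t, i = n - 1) := by
  ext t
  simp only [mem_filter, mem_powerset]
  constructor
  · rintro ⟨hsub, hsum⟩
    refine ⟨fun x hx => ?_, hsum⟩
    have := mem_Icc.1 (hsub hx)
    have hxle : x ≤ ∑ i ∈ t, i := single_le_sum (f := fun i => i) (fun i _ => Nat.zero_le i) hx
    simp only [mem_Icc]
    omega
  · rintro ⟨hsub, hsum⟩
    refine ⟨fun x hx => ?_, hsum⟩
    have := mem_Icc.1 (hsub hx)
    simp only [mem_Icc]
    omega

lemma dsum_rec (m : ℕ) (hm : 1 ≤ m) : dsum (m + 1) = dsum m - e (m + 1) := by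
  have hfr := franklin (m + 1) (by omega)
  have hsplit := Finset.sum_filter_add_sum_filter_not (pset (m+1)) (fun S => 1 ∈ S)
    (fun S => (-1:ℤ) ^ S.card)
  rw [pset_split_mem (m+1) (by omega), pset_split_nomem (m+1)] at hsplit
  rw [shrink (m+1) (by omega)] at hsplit
  simp only [Nat.add_sub_cancel] at hsplit
  rw [Finset.sum_neg_distrib] at hsplit
  have hd1 : dsum (m + 1) = ∑ S ∈ (Icc 2 (m+1)).powerset.filter
      (fun S => ∑ i ∈ S, i = m + 1), (-1:ℤ) ^ S.card := rfl
  have hd2 : dsum m = ∑ S ∈ (Icc 2 m).powerset.filter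
      (fun S => ∑ i ∈ S, i = m), (-1:ℤ) ^ S.card := rfl
  rw [← hd1, ← hd2] at hsplit
  rw [hfr] at hsplit
  linarith

lemma dsum_eq (n : ℕ) (hn : 1 ≤ n) : dsum n = - f n := by
  induction n with
  | zero => omega
  | succ m ih =>
    rcases Nat.eq_zero_or_pos m with rfl | hm
    · -- n = 1
      have h1 : dsum 1 = 0 := by
        have he : Icc 2 1 = (∅ : Finset ℕ) := Icc_eq_empty (by omega)
        rw [dsum, he]
        simp [Finset.powerset_empty, Finset.filter_singleton]
      rw [h1]
      have : f 1 = 0 := by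
        simp [f, e, Finset.sum_range_succ]
      rw [this]; ring
    · rw [dsum_rec m hm, ih hm]
      have : f (m + 1) = f m + e (m + 1) := Finset.sum_range_succ _ _
      rw [this]; ring

lemma coeff_prod_one_sub (s : Finset ℕ) (n : ℕ) :
    (∏ j ∈ s, (1 - Polynomial.X ^ j : Polynomial ℤ)).coeff n
      = ∑ t ∈ s.powerset, if (∑ i ∈ t, i) = n then (-1 : ℤ) ^ t.card else 0 := by
  have h1 : (∏ j ∈ s, (1 - Polynomial.X ^ j : Polynomial ℤ))
      = ∑ t ∈ s.powerset, (-1 : Polynomial ℤ) ^ t.card * Polynomial.X ^ (∑ i ∈ t, i) := by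
    calc (∏ j ∈ s, (1 - Polynomial.X ^ j : Polynomial ℤ))
        = ∏ j ∈ s, ((-(Polynomial.X ^ j)) + 1 : Polynomial ℤ) := by
          refine Finset.prod_congr rfl fun j _ => by ring
      _ = ∑ t ∈ s.powerset, (∏ j ∈ t, (-(Polynomial.X ^ j) : Polynomial ℤ))
            * ∏ j ∈ s \ t, (1 : Polynomial ℤ) :=
          Finset.prod_add _ _ s
      _ = _ := by
          refine Finset.sum_congr rfl fun t ht => ?_
          rw [Finset.prod_const_one, mul_one]
          calc (∏ j ∈ t, (-(Polynomial.X ^ j) : Polynomial ℤ))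
              = ∏ j ∈ t, ((-1) * Polynomial.X ^ j : Polynomial ℤ) := by
                refine Finset.prod_congr rfl fun j _ => by ring
            _ = (∏ j ∈ t, (-1 : Polynomial ℤ)) * ∏ j ∈ t, (Polynomial.X ^ j : Polynomial ℤ) :=
                Finset.prod_mul_distrib
            _ = (-1 : Polynomial ℤ) ^ t.card * Polynomial.X ^ (∑ i ∈ t, i) := by
                rw [Finset.prod_const, Finset.prod_pow_eq_pow_sum]
  rw [h1, Polynomial.finset_sum_coeff]
  refine Finset.sum_congr rfl fun t ht => ?_
  have h2 : ((-1 : Polynomial ℤ) ^ t.card) = Polynomial.C ((-1 : ℤ) ^ t.card) := by simp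
  rw [h2, Polynomial.coeff_C_mul, Polynomial.coeff_X_pow]
  by_cases h : (∑ i ∈ t, i) = n
  · simp [h]
  · simp [h, Ne.symm h]

theorem coeff_prod_eq_neg_f (n : ℕ) (hn : 1 ≤ n) :
    (∏ j ∈ Finset.Icc 2 n, (1 - Polynomial.X ^ j : Polynomial ℤ)).coeff n = - f n := by
  rw [coeff_prod_one_sub (Finset.Icc 2 n) n, ← Finset.sum_filter]
  exact dsum_eq n hn
end

section
/- For every natural number n, the coefficient of X^n in the polynomial ∏_{j=1}^{n} (1 − X^j) over ℤ equals −e(n) (the pentagonal number theorem). -/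
open Finset

namespace Pent

noncomputable def mv (S : Finset ℕ) : ℕ := S.sup id
noncomputable def sv (S : Finset ℕ) : ℕ := sInf (S : Set ℕ)
noncomputable def rv (S : Finset ℕ) : ℕ := sInf {j : ℕ | mv S - j ∉ S}

def condA (S : Finset ℕ) : Prop := sv S ≤ rv S ∧ 2 * sv S ≤ mv S
def condB (S : Finset ℕ) : Prop := rv S < sv S ∧ mv S ≠ 2 * rv S

open Classical in
noncomputable def phi (S : Finset ℕ) : Finset ℕ :=
  if S = ∅ then S
  else if condA S then insert (mv S + 1) ((S.erase (sv S)).erase (mv S - sv S + 1))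
  else if condB S then insert (rv S) (insert (mv S - rv S) (S.erase (mv S)))
  else S

variable {S : Finset ℕ} {x j : ℕ}

lemma sv_mem (hS : S.Nonempty) : sv S ∈ S := by
  obtain ⟨x, hx⟩ := hS
  exact Nat.sInf_mem ⟨x, by exact hx⟩

lemma sv_le (hx : x ∈ S) : sv S ≤ x := Nat.sInf_le hx

lemma sv_pos (hS : S.Nonempty) (h0 : 0 ∉ S) : 1 ≤ sv S := by
  rcases Nat.eq_zero_or_pos (sv S) with h | h
  · exact absurd (h ▸ sv_mem hS) h0
  · exact h

lemma mv_mem (hS : S.Nonempty) : mv S ∈ S := by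
  obtain ⟨b, hb, he⟩ := Finset.exists_mem_eq_sup S hS id
  simpa [mv, he] using hb

lemma le_mv (hx : x ∈ S) : x ≤ mv S := Finset.le_sup (f := id) hx

lemma rv_gap (h0 : 0 ∉ S) : mv S - rv S ∉ S := by
  have : ∃ j, mv S - j ∉ S := ⟨mv S, by simpa using h0⟩
  exact Nat.sInf_mem this

lemma mem_of_lt_rv (h : j < rv S) : mv S - j ∈ S := by
  have := Nat.notMem_of_lt_sInf (s := {j : ℕ | mv S - j ∉ S}) h
  simpa using this

lemma rv_pos (hS : S.Nonempty) (h0 : 0 ∉ S) : 1 ≤ rv S := by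
  rcases Nat.eq_zero_or_pos (rv S) with h | h
  · exfalso
    have := rv_gap (S := S) h0
    rw [h] at this; simp at this; exact this (mv_mem hS)
  · exact h

lemma rv_le_mv (h0 : 0 ∉ S) : rv S ≤ mv S := Nat.sInf_le (by simpa using h0)

lemma mem_of_run (h0 : 0 ∉ S) (h1 : mv S - rv S < x) (h2 : x ≤ mv S) : x ∈ S := by
  have hr : mv S - x < rv S := by omega
  have := mem_of_lt_rv hr
  have hx : mv S - (mv S - x) = x := by omega
  rwa [hx] at this


noncomputable def TA (S : Finset ℕ) : Finset ℕ :=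
  insert (mv S + 1) ((S.erase (sv S)).erase (mv S - sv S + 1))

noncomputable def TB (S : Finset ℕ) : Finset ℕ :=
  insert (rv S) (insert (mv S - rv S) (S.erase (mv S)))

open Classical in
lemma phi_of_A (hS : S.Nonempty) (hA : condA S) : phi S = TA S := by
  rw [phi, if_neg hS.ne_empty, if_pos hA]; rfl

open Classical in
lemma phi_of_B (hS : S.Nonempty) (hnA : ¬ condA S) (hB : condB S) : phi S = TB S := by
  rw [phi, if_neg hS.ne_empty, if_neg hnA, if_pos hB]; rfl

section OpA
variable (hS : S.Nonempty) (h0 : 0 ∉ S) (hA : condA S)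
include hS h0 hA

lemma A_mid_mem : mv S - sv S + 1 ∈ S := by
  have h1 := hA.1; have h2 := hA.2
  have hsm := sv_le (mv_mem hS)
  have hs1 := sv_pos hS h0
  exact mem_of_run h0 (by omega) (by omega)

lemma A_ne : sv S ≠ mv S - sv S + 1 := by
  have h2 := hA.2; have hs1 := sv_pos hS h0
  omega

omit hS h0 hA in
lemma A_top_notmem : mv S + 1 ∉ S := fun h => by
  have := le_mv h; omega

omit hS h0 hA in
lemma mem_TA : x ∈ TA S ↔ x = mv S + 1 ∨ (x ∈ S ∧ x ≠ sv S ∧ x ≠ mv S - sv S + 1) := by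
  simp only [TA, mem_insert, mem_erase]
  tauto

lemma TA_card : (TA S).card + 1 = S.card := by
  have hmid := A_mid_mem hS h0 hA
  have hne := A_ne hS h0 hA
  have h1 : mv S - sv S + 1 ∈ S.erase (sv S) := mem_erase.2 ⟨hne.symm, hmid⟩
  have h2 : mv S + 1 ∉ (S.erase (sv S)).erase (mv S - sv S + 1) := by
    intro h
    exact A_top_notmem (mem_of_mem_erase (mem_of_mem_erase h))
  have hc1 : (S.erase (sv S)).card + 1 = S.card := card_erase_add_one (sv_mem hS)
  have hc2 : ((S.erase (sv S)).erase (mv S - sv S + 1)).card + 1 = (S.erase (sv S)).card :=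
    card_erase_add_one h1
  rw [TA, card_insert_of_notMem h2]
  omega

lemma TA_sum : ∑ x ∈ TA S, x = ∑ x ∈ S, x := by
  have hmid := A_mid_mem hS h0 hA
  have hne := A_ne hS h0 hA
  have hs1 := sv_pos hS h0
  have hsm := sv_le (mv_mem hS)
  have h1 : mv S - sv S + 1 ∈ S.erase (sv S) := mem_erase.2 ⟨hne.symm, hmid⟩
  have h2 : mv S + 1 ∉ (S.erase (sv S)).erase (mv S - sv S + 1) := by
    intro h
    exact A_top_notmem (mem_of_mem_erase (mem_of_mem_erase h))
  have e1 : ∑ x ∈ (S.erase (sv S)).erase (mv S - sv S + 1), x + (mv S - sv S + 1)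
      = ∑ x ∈ S.erase (sv S), x := sum_erase_add _ _ h1
  have e2 : ∑ x ∈ S.erase (sv S), x + sv S = ∑ x ∈ S, x := sum_erase_add _ _ (sv_mem hS)
  rw [TA, sum_insert h2]
  omega

omit hS h0 hA in
lemma TA_nonempty : (TA S).Nonempty := ⟨mv S + 1, by rw [mem_TA]; left; rfl⟩

omit hS hA in
lemma TA_zero_notmem : 0 ∉ TA S := by
  rw [mem_TA]
  push_neg
  exact ⟨by omega, fun h => absurd h h0⟩

omit h0 hA in
lemma TA_sv_gt : sv S < sv (TA S) := by
  have hsm := sv_le (mv_mem hS)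
  have hm := sv_mem (TA_nonempty (S := S))
  rw [mem_TA] at hm
  rcases hm with h | ⟨h1, h2, _⟩
  · omega
  · exact lt_of_le_of_ne (sv_le h1) (Ne.symm h2)

omit h0 hA in
lemma TA_le_top (hx : x ∈ TA S) : x ≤ mv S + 1 := by
  rw [mem_TA] at hx
  rcases hx with h | ⟨h1, _, _⟩
  · omega
  · have := le_mv h1; omega

omit h0 hA in
lemma TA_mv : mv (TA S) = mv S + 1 := by
  refine le_antisymm ?_ (le_mv (by rw [mem_TA]; left; rfl))
  exact Finset.sup_le fun x hx => TA_le_top hS (hx := hx)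

lemma TA_rv : rv (TA S) = sv S := by
  have hs1 := sv_pos hS h0
  have hsm := sv_le (mv_mem hS)
  have h2s := hA.2
  have h1s := hA.1
  have hub : rv (TA S) ≤ sv S := by
    apply Nat.sInf_le
    simp only [Set.mem_setOf_eq, TA_mv hS]
    have harith : mv S + 1 - sv S = mv S - sv S + 1 := by omega
    rw [harith, mem_TA]
    push_neg
    exact ⟨by omega, fun _ _ => rfl⟩
  refine le_antisymm hub ?_
  by_contra hcon
  push_neg at hcon
  have hgap := rv_gap (TA_zero_notmem h0 (S := S))
  apply hgap
  rw [TA_mv hS, mem_TA]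
  rcases Nat.eq_zero_or_pos (rv (TA S)) with h | h
  · left; omega
  · right
    have hmem : mv S - (rv (TA S) - 1) ∈ S := mem_of_lt_rv (by omega)
    have harith : mv S + 1 - rv (TA S) = mv S - (rv (TA S) - 1) := by omega
    rw [harith]
    have hle : mv S - (rv (TA S) - 1) ≥ mv S - sv S + 2 := by omega
    exact ⟨hmem, by omega, by omega⟩

lemma TA_condB : condB (TA S) := by
  constructor
  · rw [TA_rv hS h0 hA]; exact TA_sv_gt hS
  · rw [TA_rv hS h0 hA, TA_mv hS]
    have h2s := hA.2
    omega

lemma TA_not_condA : ¬ condA (TA S) := by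
  intro h
  have := h.1
  rw [TA_rv hS h0 hA] at this
  exact absurd (lt_of_lt_of_le (TA_sv_gt hS) this) (lt_irrefl _)

lemma phi_TA : phi (TA S) = S := by
  rw [phi_of_B (TA_nonempty) (TA_not_condA hS h0 hA) (TA_condB hS h0 hA)]
  rw [TB, TA_rv hS h0 hA, TA_mv hS]
  have hs1 := sv_pos hS h0
  have hsm := sv_le (mv_mem hS)
  have harith : mv S + 1 - sv S = mv S - sv S + 1 := by omega
  rw [harith]
  have h2 : mv S + 1 ∉ (S.erase (sv S)).erase (mv S - sv S + 1) := by
    intro h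
    exact A_top_notmem (mem_of_mem_erase (mem_of_mem_erase h))
  have e1 : (TA S).erase (mv S + 1) = (S.erase (sv S)).erase (mv S - sv S + 1) := by
    rw [TA, erase_insert h2]
  rw [e1]
  have hmid : mv S - sv S + 1 ∈ S.erase (sv S) :=
    mem_erase.2 ⟨(A_ne hS h0 hA).symm, A_mid_mem hS h0 hA⟩
  rw [insert_erase hmid, insert_erase (sv_mem hS)]

end OpA

section OpB
variable (hS : S.Nonempty) (h0 : 0 ∉ S) (hB : condB S)
include hS h0 hB

omit hB in
lemma m_pos : 1 ≤ mv S := by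
  have := mv_mem hS
  rcases Nat.eq_zero_or_pos (mv S) with h | h
  · exact absurd (h ▸ this) h0
  · exact h

omit hB in
lemma run_lo_mem : mv S - rv S + 1 ∈ S := by
  have h1 := rv_pos hS h0
  have h2 := rv_le_mv h0
  have h3 := m_pos hS h0
  exact mem_of_run h0 (by omega) (by omega)

lemma B_two_r : 2 * rv S < mv S := by
  have h1 := rv_pos hS h0
  have h2 := rv_le_mv h0
  have h4 := sv_le (run_lo_mem hS h0)
  have h5 := hB.1
  have h6 := hB.2
  omega

lemma B_r_notmem : rv S ∉ S := fun h => absurd (sv_le h) (by have := hB.1; omega)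

omit hS h0 hB in
lemma mem_TB : x ∈ TB S ↔ x = rv S ∨ x = mv S - rv S ∨ (x ∈ S ∧ x ≠ mv S) := by
  simp only [TB, mem_insert, mem_erase]
  tauto

lemma B_notmem_aux : rv S ∉ insert (mv S - rv S) (S.erase (mv S)) := by
  have h2r := B_two_r hS h0 hB
  simp only [mem_insert, mem_erase]
  push_neg
  exact ⟨by omega, fun _ h => absurd h (B_r_notmem hS h0 hB)⟩

omit hS hB in
lemma B_notmem_aux2 : mv S - rv S ∉ S.erase (mv S) :=
  fun h => absurd (mem_of_mem_erase h) (rv_gap h0)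

lemma TB_card : (TB S).card = S.card + 1 := by
  rw [TB, card_insert_of_notMem (B_notmem_aux hS h0 hB),
    card_insert_of_notMem (B_notmem_aux2 h0), card_erase_of_mem (mv_mem hS)]
  have : 1 ≤ S.card := card_pos.2 hS
  omega

lemma TB_sum : ∑ x ∈ TB S, x = ∑ x ∈ S, x := by
  rw [TB, sum_insert (B_notmem_aux hS h0 hB), sum_insert (B_notmem_aux2 h0)]
  have e1 : ∑ x ∈ S.erase (mv S), x + mv S = ∑ x ∈ S, x := sum_erase_add _ _ (mv_mem hS)
  have h2 := rv_le_mv h0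
  omega

omit hS h0 hB in
lemma TB_nonempty : (TB S).Nonempty := ⟨rv S, by rw [mem_TB]; left; rfl⟩

lemma TB_zero_notmem : 0 ∉ TB S := by
  have h1 := rv_pos hS h0
  have h2r := B_two_r hS h0 hB
  rw [mem_TB]
  push_neg
  exact ⟨by omega, by omega, fun h => absurd h h0⟩

lemma TB_sv : sv (TB S) = rv S := by
  have h2r := B_two_r hS h0 hB
  have h5 := hB.1
  refine le_antisymm (sv_le (by rw [mem_TB]; left; rfl)) ?_
  have hm := sv_mem (TB_nonempty (S := S))
  rw [mem_TB] at hm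
  rcases hm with h | h | ⟨h1, _⟩
  · omega
  · omega
  · have := sv_le h1; omega

lemma TB_mv : mv (TB S) = mv S - 1 := by
  have h1 := rv_pos hS h0
  have h2r := B_two_r hS h0 hB
  refine le_antisymm ?_ ?_
  · apply Finset.sup_le
    intro x hx
    rw [mem_TB] at hx
    simp only [id_eq]
    rcases hx with h | h | ⟨h3, h4⟩
    · omega
    · omega
    · have := le_mv h3; omega
  · apply le_mv
    rw [mem_TB]
    rcases Nat.lt_or_ge 1 (rv S) with h | h
    · right; right
      have := mem_of_lt_rv (S := S) (j := 1) h
      exact ⟨this, by omega⟩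
    · right; left; omega

lemma TB_rv_ge : rv S ≤ rv (TB S) := by
  have h1 := rv_pos hS h0
  have h2r := B_two_r hS h0 hB
  by_contra hcon
  push_neg at hcon
  have hgap := rv_gap (TB_zero_notmem hS h0 hB)
  apply hgap
  rw [TB_mv hS h0 hB, mem_TB]
  rcases Nat.lt_or_ge (rv (TB S) + 1) (rv S) with h | h
  · right; right
    have := mem_of_lt_rv (S := S) (j := rv (TB S) + 1) h
    exact ⟨by have harith : mv S - 1 - rv (TB S) = mv S - (rv (TB S) + 1) := by omega
              rw [harith]; exact this, by omega⟩
  · right; left; omega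

lemma TB_condA : condA (TB S) := by
  have h2r := B_two_r hS h0 hB
  constructor
  · rw [TB_sv hS h0 hB]; exact TB_rv_ge hS h0 hB
  · rw [TB_sv hS h0 hB, TB_mv hS h0 hB]; omega

lemma phi_TB : phi (TB S) = S := by
  have h1 := rv_pos hS h0
  have h2r := B_two_r hS h0 hB
  rw [phi_of_A (TB_nonempty) (TB_condA hS h0 hB), TA, TB_sv hS h0 hB, TB_mv hS h0 hB]
  have e0 : mv S - 1 + 1 = mv S := by omega
  have e1 : mv S - 1 - rv S + 1 = mv S - rv S := by omega
  rw [e0, e1, TB, erase_insert (B_notmem_aux hS h0 hB),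
    erase_insert (B_notmem_aux2 h0), insert_erase (mv_mem hS)]

end OpB

lemma fixed_classify (hS : S.Nonempty) (h0 : 0 ∉ S) (hnA : ¬ condA S) (hnB : ¬ condB S) :
    (∃ k, 1 ≤ k ∧ S = Icc k (2 * k - 1)) ∨ (∃ k, 1 ≤ k ∧ S = Icc (k + 1) (2 * k)) := by
  have hs1 := sv_pos hS h0
  have hr1 := rv_pos hS h0
  have hsm := sv_le (mv_mem hS)
  have hrm := rv_le_mv h0
  rcases le_or_gt (sv S) (rv S) with h | h
  · left
    have hm : mv S < 2 * sv S := by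
      by_contra hc; exact hnA ⟨h, by omega⟩
    have hicc : S = Icc (sv S) (mv S) := by
      apply Finset.Subset.antisymm
      · intro x hx; exact mem_Icc.2 ⟨sv_le hx, le_mv hx⟩
      · intro x hx
        rw [mem_Icc] at hx
        exact mem_of_run h0 (by omega) hx.2
    have hrub : rv S ≤ mv S - sv S + 1 := by
      apply Nat.sInf_le
      simp only [Set.mem_setOf_eq]
      intro hmem
      have := sv_le hmem
      omega
    refine ⟨sv S, hs1, ?_⟩
    rw [show 2 * sv S - 1 = mv S by omega]
    exact hicc
  · right
    have hm : mv S = 2 * rv S := by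
      by_contra hc; exact hnB ⟨h, hc⟩
    refine ⟨rv S, hr1, ?_⟩
    rw [← hm]
    apply Finset.Subset.antisymm
    · intro x hx
      rw [mem_Icc]
      have := sv_le hx; have := le_mv hx
      omega
    · intro x hx
      rw [mem_Icc] at hx
      exact mem_of_run h0 (by omega) hx.2

lemma Icc_sv {a b : ℕ} (h : a ≤ b) : sv (Icc a b) = a := by
  have hne : (Icc a b).Nonempty := Finset.nonempty_Icc.2 h
  refine le_antisymm (sv_le (mem_Icc.2 ⟨le_refl a, h⟩)) ?_
  exact (mem_Icc.1 (sv_mem hne)).1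

lemma Icc_mv {a b : ℕ} (h : a ≤ b) : mv (Icc a b) = b := by
  have hne : (Icc a b).Nonempty := Finset.nonempty_Icc.2 h
  refine le_antisymm ?_ (le_mv (mem_Icc.2 ⟨h, le_refl b⟩))
  exact (mem_Icc.1 (mv_mem hne)).2

lemma Icc_rv {a b : ℕ} (h : a ≤ b) (ha : 1 ≤ a) : rv (Icc a b) = b - a + 1 := by
  have hne : (Icc a b).Nonempty := Finset.nonempty_Icc.2 h
  have h0 : 0 ∉ Icc a b := by rw [mem_Icc]; omega
  refine le_antisymm ?_ ?_
  · apply Nat.sInf_le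
    simp only [Set.mem_setOf_eq, Icc_mv h, mem_Icc]
    omega
  · by_contra hc
    push_neg at hc
    have := rv_gap (S := Icc a b) h0
    rw [Icc_mv h, mem_Icc] at this
    have hrm := rv_le_mv (S := Icc a b) h0
    rw [Icc_mv h] at hrm
    omega

open Classical in
lemma stair1_fixed {k : ℕ} (hk : 1 ≤ k) : phi (Icc k (2 * k - 1)) = Icc k (2 * k - 1) := by
  have h : k ≤ 2 * k - 1 := by omega
  have hne : (Icc k (2 * k - 1)).Nonempty := Finset.nonempty_Icc.2 h
  rw [phi, if_neg hne.ne_empty, if_neg, if_neg]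
  · rw [condB, Icc_sv h, Icc_rv h hk, Icc_mv h]
    omega
  · rw [condA, Icc_sv h, Icc_rv h hk, Icc_mv h]
    omega

open Classical in
lemma stair2_fixed {k : ℕ} (hk : 1 ≤ k) : phi (Icc (k + 1) (2 * k)) = Icc (k + 1) (2 * k) := by
  have h : k + 1 ≤ 2 * k := by omega
  have hne : (Icc (k + 1) (2 * k)).Nonempty := Finset.nonempty_Icc.2 h
  rw [phi, if_neg hne.ne_empty, if_neg, if_neg]
  · rw [condB, Icc_sv h, Icc_rv h (by omega), Icc_mv h]
    omega
  · rw [condA, Icc_sv h, Icc_rv h (by omega), Icc_mv h]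
    omega

lemma sum_Icc_from (a L : ℕ) : 2 * ∑ x ∈ Icc a (a + L), x = (L + 1) * (2 * a + L) := by
  rw [← Finset.Ico_add_one_right_eq_Icc, Finset.sum_Ico_eq_sum_range]
  have h1 : a + L + 1 - a = L + 1 := by omega
  rw [h1]
  have h2 : ∑ i ∈ range (L + 1), (a + i) = (L + 1) * a + ∑ i ∈ range (L + 1), i := by
    rw [Finset.sum_add_distrib, Finset.sum_const, Finset.card_range, smul_eq_mul]
  rw [h2]
  have h3 : (∑ i ∈ range (L + 1), i) * 2 = (L + 1) * L := by
    simpa using Finset.sum_range_id_mul_two (L + 1)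
  have h4 : (L + 1) * (2 * a + L) = 2 * ((L + 1) * a) + (L + 1) * L := by ring
  rw [h4, ← h3]; ring

lemma stair1_sum {k : ℕ} (hk : 1 ≤ k) : 2 * ∑ x ∈ Icc k (2 * k - 1), x + k = 3 * k ^ 2 := by
  have h : 2 * k - 1 = k + (k - 1) := by omega
  rw [h, sum_Icc_from k (k - 1)]
  have h2 : k - 1 + 1 = k := by omega
  have h3 : 2 * k + (k - 1) = 3 * k - 1 := by omega
  rw [h2, h3]
  have h4 : k * (3 * k - 1) + k = k * (3 * k) := by
    have : 3 * k - 1 + 1 = 3 * k := by omega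
    calc k * (3 * k - 1) + k = k * (3 * k - 1 + 1) := by ring
    _ = k * (3 * k) := by rw [this]
  rw [h4]; ring

lemma stair2_sum {k : ℕ} (hk : 1 ≤ k) : 2 * ∑ x ∈ Icc (k + 1) (2 * k), x = 3 * k ^ 2 + k := by
  have h : 2 * k = (k + 1) + (k - 1) := by omega
  rw [h, sum_Icc_from (k + 1) (k - 1)]
  have h2 : k - 1 + 1 = k := by omega
  have h3 : 2 * (k + 1) + (k - 1) = 3 * k + 1 := by omega
  rw [h2, h3]; ring

def Pset (n : ℕ) : Finset (Finset ℕ) :=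
  (Icc 1 n).powerset.filter (fun S => ∑ x ∈ S, x = n)

lemma mem_Pset {n : ℕ} : S ∈ Pset n ↔ S ⊆ Icc 1 n ∧ ∑ x ∈ S, x = n := by
  simp [Pset]

lemma zero_notmem_Pset {n : ℕ} (h : S ∈ Pset n) : 0 ∉ S := by
  intro h0
  have := (mem_Pset.1 h).1 h0
  rw [mem_Icc] at this
  omega

lemma mem_Pset_of {n : ℕ} (h0 : 0 ∉ S) (hsum : ∑ x ∈ S, x = n) : S ∈ Pset n := by
  rw [mem_Pset]
  refine ⟨fun x hx => ?_, hsum⟩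
  rw [mem_Icc]
  constructor
  · rcases Nat.eq_zero_or_pos x with h | h
    · exact absurd (h ▸ hx) h0
    · exact h
  · calc x = id x := rfl
    _ ≤ ∑ y ∈ S, y := Finset.single_le_sum (fun i _ => Nat.zero_le i) hx
    _ = n := hsum

open Classical in
lemma phi_empty : phi (∅ : Finset ℕ) = ∅ := by rw [phi, if_pos rfl]

open Classical in
lemma phi_of_fix (hnA : ¬ condA S) (hnB : ¬ condB S) : phi S = S := by
  rw [phi]
  split_ifs <;> rfl

lemma phi_mem {n : ℕ} (h : S ∈ Pset n) : phi S ∈ Pset n := by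
  have h0 := zero_notmem_Pset h
  have hsum := (mem_Pset.1 h).2
  rcases eq_or_ne S ∅ with rfl | hne
  · rw [phi_empty]; exact h
  have hS : S.Nonempty := nonempty_iff_ne_empty.2 hne
  by_cases hA : condA S
  · rw [phi_of_A hS hA]
    exact mem_Pset_of (TA_zero_notmem h0) (by rw [TA_sum hS h0 hA]; exact hsum)
  by_cases hB : condB S
  · rw [phi_of_B hS hA hB]
    exact mem_Pset_of (TB_zero_notmem hS h0 hB) (by rw [TB_sum hS h0 hB]; exact hsum)
  · rw [phi_of_fix hA hB]; exact h

lemma phi_phi {n : ℕ} (h : S ∈ Pset n) : phi (phi S) = S := by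
  have h0 := zero_notmem_Pset h
  rcases eq_or_ne S ∅ with rfl | hne
  · rw [phi_empty, phi_empty]
  have hS : S.Nonempty := nonempty_iff_ne_empty.2 hne
  by_cases hA : condA S
  · rw [phi_of_A hS hA]; exact phi_TA hS h0 hA
  by_cases hB : condB S
  · rw [phi_of_B hS hA hB]; exact phi_TB hS h0 hB
  · rw [phi_of_fix hA hB, phi_of_fix hA hB]

lemma phi_sign {n : ℕ} (h : S ∈ Pset n) (hne : phi S ≠ S) :
    (-1 : ℤ) ^ S.card + (-1 : ℤ) ^ (phi S).card = 0 := by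
  have h0 := zero_notmem_Pset h
  rcases eq_or_ne S ∅ with rfl | hne'
  · exact absurd phi_empty hne
  have hS : S.Nonempty := nonempty_iff_ne_empty.2 hne'
  by_cases hA : condA S
  · rw [phi_of_A hS hA]
    have hc := TA_card hS h0 hA
    have : S.card = (TA S).card + 1 := hc.symm
    rw [this, pow_succ]
    ring
  by_cases hB : condB S
  · rw [phi_of_B hS hA hB]
    rw [TB_card hS h0 hB, pow_succ]
    ring
  · exact absurd (phi_of_fix hA hB) hne

lemma fix_mem_classify {n : ℕ} (hmem : S ∈ Pset n) (hfix : phi S = S) :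
    (S = ∅ ∧ n = 0) ∨ (∃ j, 1 ≤ j ∧ S = Icc j (2 * j - 1) ∧ 2 * n + j = 3 * j ^ 2) ∨
      (∃ j, 1 ≤ j ∧ S = Icc (j + 1) (2 * j) ∧ 2 * n = 3 * j ^ 2 + j) := by
  have h0 := zero_notmem_Pset hmem
  have hsum := (mem_Pset.1 hmem).2
  rcases eq_or_ne S ∅ with rfl | hne
  · left; exact ⟨rfl, by simpa using hsum.symm⟩
  have hS : S.Nonempty := nonempty_iff_ne_empty.2 hne
  have hnA : ¬ condA S := by
    intro hA
    have := TA_card hS h0 hA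
    rw [← phi_of_A hS hA, hfix] at this
    omega
  have hnB : ¬ condB S := by
    intro hB
    have := TB_card hS h0 hB
    rw [← phi_of_B hS hnA hB, hfix] at this
    omega
  rcases fixed_classify hS h0 hnA hnB with ⟨j, hj, rfl⟩ | ⟨j, hj, rfl⟩
  · right; left
    refine ⟨j, hj, rfl, ?_⟩
    rw [← hsum]
    exact stair1_sum hj
  · right; right
    refine ⟨j, hj, rfl, ?_⟩
    rw [← hsum]
    exact stair2_sum hj

lemma stair1_mem_fix {n j : ℕ} (hj : 1 ≤ j) (hn : 2 * n + j = 3 * j ^ 2) :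
    Icc j (2 * j - 1) ∈ Pset n ∧ phi (Icc j (2 * j - 1)) = Icc j (2 * j - 1) := by
  refine ⟨mem_Pset_of (by rw [mem_Icc]; omega) ?_, stair1_fixed hj⟩
  have := stair1_sum hj
  omega

lemma stair2_mem_fix {n j : ℕ} (hj : 1 ≤ j) (hn : 2 * n = 3 * j ^ 2 + j) :
    Icc (j + 1) (2 * j) ∈ Pset n ∧ phi (Icc (j + 1) (2 * j)) = Icc (j + 1) (2 * j) := by
  refine ⟨mem_Pset_of (by rw [mem_Icc]; omega) ?_, stair2_fixed hj⟩
  have := stair2_sum hj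
  omega

lemma k_le_3sq (k : ℕ) : k ≤ 3 * k ^ 2 := by nlinarith

lemma uniq1 {n k j : ℕ} (h1 : 2 * n + k = 3 * k ^ 2) (h2 : 2 * n + j = 3 * j ^ 2) : k = j := by
  rcases Nat.lt_trichotomy k j with h | h | h
  · obtain ⟨d, rfl⟩ : ∃ d, j = k + (d + 1) := ⟨j - k - 1, by omega⟩
    exfalso; nlinarith
  · exact h
  · obtain ⟨d, rfl⟩ : ∃ d, k = j + (d + 1) := ⟨k - j - 1, by omega⟩
    exfalso; nlinarith

lemma uniq2 {n k j : ℕ} (h1 : 2 * n + k = 3 * k ^ 2) (h2 : 2 * n = 3 * j ^ 2 + j) :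
    k = 0 ∧ j = 0 := by
  rcases le_or_gt k j with h | h
  · have : 3 * k ^ 2 ≤ 3 * j ^ 2 := by nlinarith
    constructor <;> nlinarith
  · obtain ⟨d, rfl⟩ : ∃ d, k = j + (d + 1) := ⟨k - j - 1, by omega⟩
    exfalso; nlinarith

lemma uniq3 {n k j : ℕ} (h1 : 2 * n = 3 * k ^ 2 + k) (h2 : 2 * n = 3 * j ^ 2 + j) : k = j := by
  rcases Nat.lt_trichotomy k j with h | h | h
  · obtain ⟨d, rfl⟩ : ∃ d, j = k + (d + 1) := ⟨j - k - 1, by omega⟩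
    exfalso; nlinarith
  · exact h
  · obtain ⟨d, rfl⟩ : ∃ d, k = j + (d + 1) := ⟨k - j - 1, by omega⟩
    exfalso; nlinarith

lemma cond_iff {n k : ℕ} :
    (2 * n = 3 * k ^ 2 - k ∨ 2 * n = 3 * k ^ 2 + k) ↔
      (2 * n + k = 3 * k ^ 2 ∨ 2 * n = 3 * k ^ 2 + k) := by
  have := k_le_3sq k
  omega

lemma e_pent1 {n k : ℕ} (h : 2 * n + k = 3 * k ^ 2) : e n = (-1) ^ (k + 1) := by
  have hk3 := k_le_3sq k
  have hmem : k ∈ Finset.range (2 * n + 2) := by rw [mem_range]; nlinarith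
  have h0x : ∀ j ∈ Finset.range (2 * n + 2), j ≠ k →
      (if 2 * n = 3 * j ^ 2 - j ∨ 2 * n = 3 * j ^ 2 + j then ((-1 : ℤ)) ^ (j + 1) else 0) = 0 := by
    intro j _ hjk
    rw [if_neg]
    intro hcond
    rw [cond_iff] at hcond
    rcases hcond with hc | hc
    · exact hjk (uniq1 hc h)
    · obtain ⟨hk0, hj0⟩ := uniq2 h hc
      omega
  rw [e, Finset.sum_eq_single_of_mem k hmem h0x, if_pos (cond_iff.mpr (Or.inl h))]

lemma e_pent2 {n k : ℕ} (h : 2 * n = 3 * k ^ 2 + k) : e n = (-1) ^ (k + 1) := by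
  have hk3 := k_le_3sq k
  have hmem : k ∈ Finset.range (2 * n + 2) := by rw [mem_range]; nlinarith
  have h0x : ∀ j ∈ Finset.range (2 * n + 2), j ≠ k →
      (if 2 * n = 3 * j ^ 2 - j ∨ 2 * n = 3 * j ^ 2 + j then ((-1 : ℤ)) ^ (j + 1) else 0) = 0 := by
    intro j _ hjk
    rw [if_neg]
    intro hcond
    rw [cond_iff] at hcond
    rcases hcond with hc | hc
    · obtain ⟨hj0, hk0⟩ := uniq2 hc h
      omega
    · exact hjk (uniq3 hc h)
  rw [e, Finset.sum_eq_single_of_mem k hmem h0x, if_pos (cond_iff.mpr (Or.inr h))]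

lemma e_zero_of {n : ℕ} (h : ∀ k, ¬ (2 * n + k = 3 * k ^ 2 ∨ 2 * n = 3 * k ^ 2 + k)) :
    e n = 0 := by
  rw [e]
  apply Finset.sum_eq_zero
  intro j _
  rw [if_neg]
  intro hcond
  exact h j (cond_iff.mp hcond)

theorem sum_Pset (n : ℕ) : ∑ S ∈ Pset n, (-1 : ℤ) ^ S.card = - e n := by
  classical
  rw [← Finset.sum_filter_add_sum_filter_not (Pset n) (fun S => phi S = S)]
  have hmove : ∑ S ∈ (Pset n).filter (fun S => ¬ phi S = S), (-1 : ℤ) ^ S.card = 0 := by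
    apply Finset.sum_involution (g := fun S _ => phi S)
    · intro S hS
      rw [mem_filter] at hS
      exact phi_sign hS.1 hS.2
    · intro S hS _
      rw [mem_filter] at hS
      exact hS.2
    · intro S hS
      rw [mem_filter] at hS ⊢
      refine ⟨phi_mem hS.1, ?_⟩
      rw [phi_phi hS.1]
      exact fun hh => hS.2 hh.symm
    · intro S hS
      rw [mem_filter] at hS
      exact phi_phi hS.1
  rw [hmove, add_zero]
  by_cases hp : ∃ k, (2 * n + k = 3 * k ^ 2 ∨ 2 * n = 3 * k ^ 2 + k)
  · obtain ⟨k, hk⟩ := hp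
    have he : e n = (-1) ^ (k + 1) := hk.elim e_pent1 e_pent2
    rw [he]
    by_cases hk0 : k = 0
    · subst hk0
      have hn0 : n = 0 := by
        rcases hk with h | h <;> omega
      subst hn0
      have hfe : (Pset 0).filter (fun S => phi S = S) = {(∅ : Finset ℕ)} := by
        ext S
        rw [mem_filter, mem_singleton, mem_Pset]
        constructor
        · rintro ⟨⟨hsub, _⟩, _⟩
          simpa using Finset.subset_empty.1 (by simpa using hsub)
        · rintro rfl
          exact ⟨⟨by simp, by simp⟩, phi_empty⟩
      rw [hfe, Finset.sum_singleton]
      simp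
    · have hk1 : 1 ≤ k := by omega
      rcases hk with hk | hk
      · have hfe : (Pset n).filter (fun S => phi S = S) = {Icc k (2 * k - 1)} := by
          ext S
          rw [mem_filter, mem_singleton]
          constructor
          · rintro ⟨hmem, hfix⟩
            rcases fix_mem_classify hmem hfix with ⟨rfl, rfl⟩ | ⟨j, hj1, rfl, hj2⟩ |
              ⟨j, hj1, rfl, hj2⟩
            · exfalso; nlinarith
            · rw [uniq1 hj2 hk]
            · obtain ⟨h1, h2⟩ := uniq2 hk hj2
              omega
          · rintro rfl
            obtain ⟨h1, h2⟩ := stair1_mem_fix hk1 hk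
            exact ⟨h1, h2⟩
        rw [hfe, Finset.sum_singleton, Nat.card_Icc]
        rw [show 2 * k - 1 + 1 - k = k by omega, pow_succ]
        ring
      · have hfe : (Pset n).filter (fun S => phi S = S) = {Icc (k + 1) (2 * k)} := by
          ext S
          rw [mem_filter, mem_singleton]
          constructor
          · rintro ⟨hmem, hfix⟩
            rcases fix_mem_classify hmem hfix with ⟨rfl, rfl⟩ | ⟨j, hj1, rfl, hj2⟩ |
              ⟨j, hj1, rfl, hj2⟩
            · exfalso; nlinarith
            · obtain ⟨h1, h2⟩ := uniq2 hj2 hk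
              omega
            · rw [uniq3 hj2 hk]
          · rintro rfl
            obtain ⟨h1, h2⟩ := stair2_mem_fix hk1 hk
            exact ⟨h1, h2⟩
        rw [hfe, Finset.sum_singleton, Nat.card_Icc]
        rw [show 2 * k + 1 - (k + 1) = k by omega, pow_succ]
        ring
  · push_neg at hp
    have he : e n = 0 := e_zero_of fun k hc =>
      hc.elim (fun h => (hp k).1 h) (fun h => (hp k).2 h)
    rw [he]
    have hfe : (Pset n).filter (fun S => phi S = S) = ∅ := by
      apply Finset.eq_empty_of_forall_notMem
      intro S hS
      rw [mem_filter] at hS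
      rcases fix_mem_classify hS.1 hS.2 with ⟨rfl, rfl⟩ | ⟨j, hj1, rfl, hj2⟩ |
        ⟨j, hj1, rfl, hj2⟩
      · exact (hp 0).1 (by norm_num)
      · exact (hp j).1 hj2
      · exact (hp j).2 hj2
    rw [hfe]
    simp

end Pent

theorem pentagonal_number_theorem (n : ℕ) :
    (∏ j ∈ Finset.Icc 1 n, (1 - Polynomial.X ^ j : Polynomial ℤ)).coeff n = - e n := by
  classical
  have h1 : ∏ j ∈ Finset.Icc 1 n, (1 - Polynomial.X ^ j : Polynomial ℤ) =
      ∏ j ∈ Finset.Icc 1 n, ((-Polynomial.X ^ j : Polynomial ℤ) + 1) := by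
    apply Finset.prod_congr rfl
    intro j _
    ring
  have h2 : ∀ t : Finset ℕ, (∏ i ∈ t, (-Polynomial.X ^ i : Polynomial ℤ)) =
      Polynomial.C ((-1 : ℤ) ^ t.card) * Polynomial.X ^ (∑ i ∈ t, i) := by
    intro t
    calc ∏ i ∈ t, (-Polynomial.X ^ i : Polynomial ℤ)
        = ∏ i ∈ t, ((-1 : Polynomial ℤ) * Polynomial.X ^ i) := by
          apply Finset.prod_congr rfl; intro i _; ring
      _ = (∏ _i ∈ t, (-1 : Polynomial ℤ)) * ∏ i ∈ t, Polynomial.X ^ i :=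
          Finset.prod_mul_distrib
      _ = Polynomial.C ((-1 : ℤ) ^ t.card) * Polynomial.X ^ (∑ i ∈ t, i) := by
          rw [Finset.prod_const, Finset.prod_pow_eq_pow_sum]
          congr 1
          rw [map_pow, Polynomial.C_neg, Polynomial.C_1]
  rw [h1, Finset.prod_add]
  simp only [Finset.prod_const_one, mul_one]
  rw [Polynomial.finset_sum_coeff]
  simp only [h2, Polynomial.coeff_C_mul, Polynomial.coeff_X_pow]
  rw [← Pent.sum_Pset n, Pent.Pset, Finset.sum_filter]
  apply Finset.sum_congr rfl
  intro t _
  rcases eq_or_ne (∑ i ∈ t, i) n with h | h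
  · simp [h]
  · simp [h, Ne.symm h]
end

section
/- Define c(n) = −(coefficient of X^n in the polynomial ∏_{i=2}^{n} (1 − X^i) over ℤ), with the empty product equal to 1. Then for every natural number j ≥ 1, c(j) − c(j−1) = e(j). -/
open Finset Polynomial

/-- `c n` is the negative of the coefficient of `X^n` in `∏_{i=2}^n (1 - X^i)` over `ℤ`
(the empty product being 1). -/
noncomputable def c (n : ℕ) : ℤ :=
  - (∏ i ∈ Finset.Icc 2 n, (1 - Polynomial.X ^ i : Polynomial ℤ)).coeff n

/-- The set of partitions of `n` into distinct (positive) parts, as subsets of `Icc 1 n`. -/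
def pA (n : ℕ) : Finset (Finset ℕ) :=
  (Finset.Icc 1 n).powerset.filter (fun S => S.sum id = n)

/-- Fixed points of Franklin's involution: staircases. -/
def isFix (S : Finset ℕ) : Prop :=
  ∃ k, 1 ≤ k ∧ (S = Finset.Icc k (2 * k - 1) ∨ S = Finset.Icc (k + 1) (2 * k))

/-- Franklin's involution. -/
noncomputable def frk (S : Finset ℕ) : Finset ℕ :=
  if h : S.Nonempty then
    (if S.min' h ≤ S.max' h - Nat.findGreatest (fun x => x ∉ S) (S.max' h) then
      ((S.erase (S.min' h)) \ Finset.Icc (S.max' h - S.min' h + 1) (S.max' h)) ∪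
        Finset.Icc (S.max' h - S.min' h + 2) (S.max' h + 1)
    else
      (S \ Finset.Icc (Nat.findGreatest (fun x => x ∉ S) (S.max' h) + 1) (S.max' h)) ∪
        Finset.Icc (Nat.findGreatest (fun x => x ∉ S) (S.max' h)) (S.max' h - 1) ∪
        {S.max' h - Nat.findGreatest (fun x => x ∉ S) (S.max' h)})
  else ∅

lemma findGreatest_eq_of {S : Finset ℕ} {M g : ℕ} (hgM : g ≤ M) (hg : g ∉ S)
    (hrun : ∀ x, g < x → x ≤ M → x ∈ S) :
    Nat.findGreatest (fun x => x ∉ S) M = g := by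
  have h1 : g ≤ Nat.findGreatest (fun x => x ∉ S) M := Nat.le_findGreatest hgM hg
  have h2 : Nat.findGreatest (fun x => x ∉ S) M ≤ M := Nat.findGreatest_le M
  rcases Nat.lt_or_ge g (Nat.findGreatest (fun x => x ∉ S) M) with h | h
  · have := Nat.findGreatest_spec (P := fun x => x ∉ S) hgM hg
    exact absurd (hrun _ h h2) this
  · omega

/-- unfolding of `frk` in case A -/
lemma frk_eq_A {S : Finset ℕ} (h : S.Nonempty) {s M : ℕ}
    (hs : s ∈ S) (hsle : ∀ x ∈ S, s ≤ x)
    (hM : M ∈ S) (hMle : ∀ x ∈ S, x ≤ M)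
    (hA : s ≤ M - Nat.findGreatest (fun x => x ∉ S) M) :
    frk S = ((S.erase s) \ Finset.Icc (M - s + 1) M) ∪ Finset.Icc (M - s + 2) (M + 1) := by
  have hmin : S.min' h = s := le_antisymm (Finset.min'_le _ _ hs) (Finset.le_min' _ _ _ hsle)
  have hmax : S.max' h = M := le_antisymm (Finset.max'_le _ _ _ hMle) (Finset.le_max' _ _ hM)
  rw [frk, dif_pos h, hmin, hmax, if_pos hA]

/-- unfolding of `frk` in case B -/
lemma frk_eq_B {S : Finset ℕ} (h : S.Nonempty) {M g : ℕ}
    (hM : M ∈ S) (hMle : ∀ x ∈ S, x ≤ M)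
    (hgM : g ≤ M) (hg : g ∉ S) (hrun : ∀ x, g < x → x ≤ M → x ∈ S)
    (hB : ∀ x ∈ S, M - g < x) :
    frk S = (S \ Finset.Icc (g + 1) M) ∪ Finset.Icc g (M - 1) ∪ {M - g} := by
  have hmax : S.max' h = M := le_antisymm (Finset.max'_le _ _ _ hMle) (Finset.le_max' _ _ hM)
  have hfg : Nat.findGreatest (fun x => x ∉ S) (S.max' h) = g := by
    rw [hmax]; exact findGreatest_eq_of hgM hg hrun
  have hmin : M - g < S.min' h := hB _ (S.min'_mem h)
  rw [frk, dif_pos h, hfg, hmax, if_neg (by omega)]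

lemma sum_Icc_shift (a b : ℕ) (h : a ≤ b) :
    (∑ i ∈ Finset.Icc (a + 1) (b + 1), i) = (∑ i ∈ Finset.Icc a b, i) + (b + 1 - a) := by
  have him : (Finset.Icc a b).image (· + 1) = Finset.Icc (a + 1) (b + 1) :=
    Finset.image_add_right_Icc a b 1
  rw [← him, Finset.sum_image (by intro x _ y _ hxy; simp only at hxy; omega)]
  rw [Finset.sum_add_distrib, Finset.sum_const, Nat.card_Icc, smul_eq_mul, mul_one]

lemma subset_Icc_one {n : ℕ} {T : Finset ℕ} (hpos : ∀ x ∈ T, 1 ≤ x) (hsum : T.sum id = n) :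
    T ⊆ Finset.Icc 1 n := by
  intro x hx
  refine Finset.mem_Icc.2 ⟨hpos x hx, ?_⟩
  calc x = id x := rfl
    _ ≤ T.sum id := Finset.single_le_sum (fun i _ => Nat.zero_le (id i)) hx
    _ = n := hsum

lemma caseA_spec {n : ℕ} {S : Finset ℕ} (hne : S.Nonempty) {s M g : ℕ}
    (hsub : S ⊆ Finset.Icc 1 n) (hsum : S.sum id = n)
    (hs : s ∈ S) (hsle : ∀ x ∈ S, s ≤ x)
    (hM : M ∈ S) (hMle : ∀ x ∈ S, x ≤ M)
    (hgM : g ≤ M) (hg : g ∉ S) (hrun : ∀ x, g < x → x ≤ M → x ∈ S)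
    (hA : s ≤ M - g) (hnf : ¬ isFix S) :
    (frk S ⊆ Finset.Icc 1 n ∧ (frk S).sum id = n ∧ ¬ isFix (frk S)) ∧
      frk (frk S) = S ∧ ((frk S).card = S.card + 1 ∨ S.card = (frk S).card + 1) := by
  have hs1 : 1 ≤ s := (Finset.mem_Icc.1 (hsub hs)).1
  have hsM : s ≤ M := hMle s hs
  have hgM' : g < M := lt_of_le_of_ne hgM (fun e => hg (e ▸ hM))
  have hgs : g + s ≤ M := by omega
  have h2s : 2 * s ≤ M := by
    by_contra h2s
    have hg1 : g + 1 ∈ S := hrun (g + 1) (by omega) (by omega)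
    have hsg : s ≤ g + 1 := hsle _ hg1
    have hSeq : S = Finset.Icc s M := by
      ext x
      simp only [Finset.mem_Icc]
      exact ⟨fun hx => ⟨hsle x hx, hMle x hx⟩, fun hx => hrun x (by omega) hx.2⟩
    have hM2 : M = 2 * s - 1 := by omega
    exact hnf ⟨s, hs1, Or.inl (by rw [hSeq, hM2])⟩
  set T := ((S.erase s) \ Finset.Icc (M - s + 1) M) ∪ Finset.Icc (M - s + 2) (M + 1) with hT
  have hfrk : frk S = T :=
    frk_eq_A hne hs hsle hM hMle (by rw [findGreatest_eq_of hgM hg hrun]; exact hA)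
  have hmemT : ∀ x, x ∈ T ↔ ((x ∈ S ∧ x ≠ s ∧ x + s ≤ M) ∨ (M + 2 ≤ x + s ∧ x ≤ M + 1)) := by
    intro x
    simp only [hT, Finset.mem_union, Finset.mem_sdiff, Finset.mem_erase, Finset.mem_Icc]
    constructor
    · rintro (⟨⟨hxs, hxS⟩, hxI⟩ | ⟨h1, h2⟩)
      · exact Or.inl ⟨hxS, hxs, by have := hMle x hxS; omega⟩
      · exact Or.inr ⟨by omega, h2⟩
    · rintro (⟨hxS, hxs, hxb⟩ | ⟨h1, h2⟩)
      · exact Or.inl ⟨⟨hxs, hxS⟩, by omega⟩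
      · exact Or.inr ⟨by omega, h2⟩
  have hub : ∀ x ∈ T, x ≤ M + 1 := by
    intro x hx
    rcases (hmemT x).1 hx with ⟨h1, _, _⟩ | ⟨_, h2⟩
    · have := hMle x h1; omega
    · exact h2
  have hlb : ∀ x ∈ T, s + 1 ≤ x := by
    intro x hx
    rcases (hmemT x).1 hx with ⟨h1, h2, _⟩ | ⟨h1, _⟩
    · have := hsle x h1; omega
    · omega
  have hrunsub : ∀ x, M - s + 1 ≤ x → x ≤ M → x ∈ S := fun x h1 h2 => hrun x (by omega) h2
  have hdis1 : Disjoint ((S.erase s) \ Finset.Icc (M - s + 1) M) (Finset.Icc (M - s + 1) M) :=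
    Finset.sdiff_disjoint
  have hdis2 : Disjoint ((S.erase s) \ Finset.Icc (M - s + 1) M) (Finset.Icc (M - s + 2) (M + 1)) := by
    rw [Finset.disjoint_left]
    intro x hx hx2
    simp only [Finset.mem_sdiff, Finset.mem_erase, Finset.mem_Icc] at hx hx2
    have := hMle x hx.1.2
    omega
  have hsnot : s ∉ ((S.erase s) \ Finset.Icc (M - s + 1) M) ∪ Finset.Icc (M - s + 1) M := by
    simp only [Finset.mem_union, Finset.mem_sdiff, Finset.mem_erase, Finset.mem_Icc]
    rintro (⟨⟨hss, _⟩, _⟩ | ⟨h1, _⟩)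
    · exact hss rfl
    · omega
  have hSdec : S = insert s (((S.erase s) \ Finset.Icc (M - s + 1) M) ∪ Finset.Icc (M - s + 1) M) := by
    ext x
    simp only [Finset.mem_insert, Finset.mem_union, Finset.mem_sdiff, Finset.mem_erase,
      Finset.mem_Icc]
    constructor
    · intro hx
      by_cases hxs : x = s
      · exact Or.inl hxs
      · by_cases hxr : M - s + 1 ≤ x
        · exact Or.inr (Or.inr ⟨hxr, hMle x hx⟩)
        · exact Or.inr (Or.inl ⟨⟨hxs, hx⟩, by omega⟩)
    · rintro (rfl | ⟨⟨_, hx⟩, _⟩ | ⟨h1, h2⟩)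
      exacts [hs, hx, hrunsub x h1 h2]
  have e1 : S.sum id = s + ((((S.erase s) \ Finset.Icc (M - s + 1) M)).sum id
      + (Finset.Icc (M - s + 1) M).sum id) := by
    conv_lhs => rw [hSdec]
    rw [Finset.sum_insert hsnot, Finset.sum_union hdis1]
    rfl
  have e2 : S.card = 1 + ((((S.erase s) \ Finset.Icc (M - s + 1) M)).card
      + (Finset.Icc (M - s + 1) M).card) := by
    conv_lhs => rw [hSdec]
    rw [Finset.card_insert_of_notMem hsnot, Finset.card_union_of_disjoint hdis1]
    omega
  have e3 : T.sum id = (((S.erase s) \ Finset.Icc (M - s + 1) M)).sum id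
      + (Finset.Icc (M - s + 2) (M + 1)).sum id := Finset.sum_union hdis2
  have e4 : T.card = (((S.erase s) \ Finset.Icc (M - s + 1) M)).card
      + (Finset.Icc (M - s + 2) (M + 1)).card := Finset.card_union_of_disjoint hdis2
  have e5 : (Finset.Icc (M - s + 2) (M + 1)).sum id = (Finset.Icc (M - s + 1) M).sum id + s := by
    have h' := sum_Icc_shift (M - s + 1) M (by omega)
    rw [show M - s + 1 + 1 = M - s + 2 by omega] at h'
    simp only [id_eq]
    rw [h']
    omega
  have c1 : (Finset.Icc (M - s + 1) M).card = s := by rw [Nat.card_Icc]; omega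
  have c2 : (Finset.Icc (M - s + 2) (M + 1)).card = s := by rw [Nat.card_Icc]; omega
  have hsum_T : T.sum id = n := by omega
  have hcard_T : S.card = T.card + 1 := by omega
  have hpos : ∀ x ∈ T, 1 ≤ x := fun x hx => by have := hlb x hx; omega
  have hsubT : T ⊆ Finset.Icc 1 n := subset_Icc_one hpos hsum_T
  have hMs1T : M - s + 1 ∉ T := by
    intro h
    rcases (hmemT _).1 h with ⟨_, _, h3⟩ | ⟨h3, _⟩ <;> omega
  have hM1T : M + 1 ∈ T := (hmemT _).2 (Or.inr ⟨by omega, le_refl _⟩)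
  have hnfT : ¬ isFix T := by
    rintro ⟨k, hk1, hk | hk⟩
    · have h1 : M + 1 ≤ 2 * k - 1 := (Finset.mem_Icc.1 (hk ▸ hM1T)).2
      have h2 : 2 * k - 1 ≤ M + 1 :=
        hub _ (by rw [hk]; exact Finset.mem_Icc.2 ⟨by omega, le_refl _⟩)
      have h3 : s + 1 ≤ k := hlb _ (by rw [hk]; exact Finset.mem_Icc.2 ⟨le_refl _, by omega⟩)
      exact hMs1T (by rw [hk]; exact Finset.mem_Icc.2 ⟨by omega, by omega⟩)
    · have h1 : M + 1 ≤ 2 * k := (Finset.mem_Icc.1 (hk ▸ hM1T)).2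
      have h2 : 2 * k ≤ M + 1 :=
        hub _ (by rw [hk]; exact Finset.mem_Icc.2 ⟨by omega, le_refl _⟩)
      have h3 : s + 1 ≤ k + 1 := hlb _ (by rw [hk]; exact Finset.mem_Icc.2 ⟨le_refl _, by omega⟩)
      exact hMs1T (by rw [hk]; exact Finset.mem_Icc.2 ⟨by omega, by omega⟩)
  have hneT : T.Nonempty := ⟨M + 1, hM1T⟩
  have hrunT : ∀ x, M - s + 1 < x → x ≤ M + 1 → x ∈ T :=
    fun x h1 h2 => (hmemT _).2 (Or.inr ⟨by omega, h2⟩)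
  have hBT : ∀ x ∈ T, (M + 1) - (M - s + 1) < x := fun x hx => by have := hlb x hx; omega
  have hfrkT : frk T = (T \ Finset.Icc (M - s + 1 + 1) (M + 1)) ∪
      Finset.Icc (M - s + 1) ((M + 1) - 1) ∪ {(M + 1) - (M - s + 1)} :=
    frk_eq_B hneT hM1T hub (by omega) hMs1T hrunT hBT
  have hback : frk T = S := by
    rw [hfrkT, show (M + 1) - 1 = M by omega, show (M + 1) - (M - s + 1) = s by omega,
      show M - s + 1 + 1 = M - s + 2 by omega]
    ext x
    simp only [Finset.mem_union, Finset.mem_sdiff, Finset.mem_singleton, Finset.mem_Icc]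
    constructor
    · rintro ((⟨hxT, hnr⟩ | ⟨h1, h2⟩) | rfl)
      · rcases (hmemT x).1 hxT with ⟨hxS, _, _⟩ | ⟨h1, h2⟩
        · exact hxS
        · omega
      · exact hrunsub x h1 h2
      · exact hs
    · intro hxS
      have hxM := hMle x hxS
      by_cases hxs : x = s
      · exact Or.inr hxs
      · by_cases hxr : M - s + 1 ≤ x
        · exact Or.inl (Or.inr ⟨hxr, hxM⟩)
        · exact Or.inl (Or.inl ⟨(hmemT x).2 (Or.inl ⟨hxS, hxs, by omega⟩), by omega⟩)
  rw [hfrk]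
  exact ⟨⟨hsubT, hsum_T, hnfT⟩, hback, Or.inr hcard_T⟩

lemma caseB_spec {n : ℕ} {S : Finset ℕ} (hne : S.Nonempty) {s M g : ℕ}
    (hsub : S ⊆ Finset.Icc 1 n) (hsum : S.sum id = n)
    (hs : s ∈ S) (hsle : ∀ x ∈ S, s ≤ x)
    (hM : M ∈ S) (hMle : ∀ x ∈ S, x ≤ M)
    (hgM : g ≤ M) (hg : g ∉ S) (hrun : ∀ x, g < x → x ≤ M → x ∈ S)
    (hB : M - g < s) (hnf : ¬ isFix S) :
    (frk S ⊆ Finset.Icc 1 n ∧ (frk S).sum id = n ∧ ¬ isFix (frk S)) ∧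
      frk (frk S) = S ∧ ((frk S).card = S.card + 1 ∨ S.card = (frk S).card + 1) := by
  have hs1 : 1 ≤ s := (Finset.mem_Icc.1 (hsub hs)).1
  have hsM : s ≤ M := hMle s hs
  have hgM' : g < M := lt_of_le_of_ne hgM (fun e => hg (e ▸ hM))
  set t := M - g with ht
  have ht1 : 1 ≤ t := by omega
  have htg : t < g := by
    by_contra hge
    have hSeq : S = Finset.Icc (g + 1) M := by
      ext x
      simp only [Finset.mem_Icc]
      constructor
      · intro hx
        refine ⟨?_, hMle x hx⟩
        have := hsle x hx
        omega
      · rintro ⟨h1, h2⟩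
        exact hrun x (by omega) h2
    have hsmem : s ∈ Finset.Icc (g + 1) M := hSeq ▸ hs
    have hseq : g + 1 ≤ s := (Finset.mem_Icc.1 hsmem).1
    have hsle' : s ≤ g + 1 := hsle _ (hrun (g + 1) (by omega) (by omega))
    have hM2g : M = 2 * g := by omega
    exact hnf ⟨g, by omega, Or.inr (by rw [hSeq, hM2g])⟩
  set T := (S \ Finset.Icc (g + 1) M) ∪ Finset.Icc g (M - 1) ∪ {t} with hT
  have hfrk : frk S = T :=
    frk_eq_B hne hM hMle hgM hg hrun (fun x hx => by have := hsle x hx; omega)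
  have hmemT : ∀ x, x ∈ T ↔ ((x ∈ S ∧ x < g) ∨ (g ≤ x ∧ x ≤ M - 1) ∨ x = t) := by
    intro x
    simp only [hT, Finset.mem_union, Finset.mem_sdiff, Finset.mem_singleton, Finset.mem_Icc]
    constructor
    · rintro ((⟨hxS, hxI⟩ | h) | h)
      · refine Or.inl ⟨hxS, ?_⟩
        have h2 := hMle x hxS
        have h3 : x ≠ g := fun e => hg (e ▸ hxS)
        omega
      · exact Or.inr (Or.inl h)
      · exact Or.inr (Or.inr h)
    · rintro (⟨hxS, hxg⟩ | h | h)
      · exact Or.inl (Or.inl ⟨hxS, by omega⟩)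
      · exact Or.inl (Or.inr h)
      · exact Or.inr h
  have hub : ∀ x ∈ T, x ≤ M - 1 := by
    intro x hx
    rcases (hmemT x).1 hx with ⟨_, h2⟩ | ⟨_, h2⟩ | rfl <;> omega
  have hlb : ∀ x ∈ T, t ≤ x := by
    intro x hx
    rcases (hmemT x).1 hx with ⟨h1, _⟩ | ⟨h1, _⟩ | rfl
    · have := hsle x h1; omega
    · omega
    · omega
  have hlb1 : ∀ x ∈ T, 1 ≤ x := fun x hx => by have := hlb x hx; omega
  have htT : t ∈ T := (hmemT _).2 (Or.inr (Or.inr rfl))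
  have hM1T : M - 1 ∈ T := (hmemT _).2 (Or.inr (Or.inl ⟨by omega, le_refl _⟩))
  have hdis1 : Disjoint (S \ Finset.Icc (g + 1) M) (Finset.Icc (g + 1) M) := Finset.sdiff_disjoint
  have hdis3 : Disjoint (S \ Finset.Icc (g + 1) M) (Finset.Icc g (M - 1)) := by
    rw [Finset.disjoint_left]
    intro x hx hx2
    simp only [Finset.mem_sdiff, Finset.mem_Icc] at hx hx2
    have h2 := hMle x hx.1
    have h3 : x ≠ g := fun e => hg (e ▸ hx.1)
    omega
  have hdis4 : t ∉ (S \ Finset.Icc (g + 1) M) ∪ Finset.Icc g (M - 1) := by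
    simp only [Finset.mem_union, Finset.mem_sdiff, Finset.mem_Icc]
    rintro (⟨h1, _⟩ | ⟨h1, _⟩)
    · have := hsle _ h1; omega
    · omega
  have hSdec : S = (S \ Finset.Icc (g + 1) M) ∪ Finset.Icc (g + 1) M := by
    ext x
    simp only [Finset.mem_union, Finset.mem_sdiff, Finset.mem_Icc]
    constructor
    · intro hx
      by_cases hxg : g + 1 ≤ x
      · exact Or.inr ⟨hxg, hMle x hx⟩
      · exact Or.inl ⟨hx, by omega⟩
    · rintro (⟨hx, _⟩ | ⟨h1, h2⟩)
      · exact hx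
      · exact hrun x (by omega) h2
  have e1 : S.sum id = (S \ Finset.Icc (g + 1) M).sum id + (Finset.Icc (g + 1) M).sum id := by
    conv_lhs => rw [hSdec]
    exact Finset.sum_union hdis1
  have e2 : S.card = (S \ Finset.Icc (g + 1) M).card + (Finset.Icc (g + 1) M).card := by
    conv_lhs => rw [hSdec]
    exact Finset.card_union_of_disjoint hdis1
  have e3 : T.sum id = ((S \ Finset.Icc (g + 1) M).sum id + (Finset.Icc g (M - 1)).sum id) + t := by
    rw [hT, Finset.sum_union (Finset.disjoint_singleton_right.2 hdis4), Finset.sum_union hdis3]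
    rfl
  have e4 : T.card = ((S \ Finset.Icc (g + 1) M).card + (Finset.Icc g (M - 1)).card) + 1 := by
    rw [hT, Finset.card_union_of_disjoint (Finset.disjoint_singleton_right.2 hdis4),
      Finset.card_union_of_disjoint hdis3, Finset.card_singleton]
  have e5 : (Finset.Icc (g + 1) M).sum id = (Finset.Icc g (M - 1)).sum id + t := by
    have h' := sum_Icc_shift g (M - 1) (by omega)
    rw [show M - 1 + 1 = M by omega] at h'
    simp only [id_eq]
    omega
  have c1 : (Finset.Icc (g + 1) M).card = t := by rw [Nat.card_Icc]; omega
  have c2 : (Finset.Icc g (M - 1)).card = t := by rw [Nat.card_Icc]; omega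
  have hsum_T : T.sum id = n := by omega
  have hcard_T : T.card = S.card + 1 := by omega
  have hsubT : T ⊆ Finset.Icc 1 n := subset_Icc_one hlb1 hsum_T
  have hnfT : ¬ isFix T := by
    rintro ⟨k, hk1, hk | hk⟩
    · have h1 := Finset.mem_Icc.1 (hk ▸ htT)
      have h2 : t ≤ k := hlb _ (by rw [hk]; exact Finset.mem_Icc.2 ⟨le_refl _, by omega⟩)
      have h3 := Finset.mem_Icc.1 (hk ▸ hM1T)
      have h4 : 2 * k - 1 ≤ M - 1 :=
        hub _ (by rw [hk]; exact Finset.mem_Icc.2 ⟨by omega, le_refl _⟩)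
      omega
    · have h1 := Finset.mem_Icc.1 (hk ▸ htT)
      have h2 : t ≤ k + 1 := hlb _ (by rw [hk]; exact Finset.mem_Icc.2 ⟨le_refl _, by omega⟩)
      have h3 := Finset.mem_Icc.1 (hk ▸ hM1T)
      have h4 : 2 * k ≤ M - 1 :=
        hub _ (by rw [hk]; exact Finset.mem_Icc.2 ⟨by omega, le_refl _⟩)
      omega
  have hneT : T.Nonempty := ⟨t, htT⟩
  have h0T : (0 : ℕ) ∉ T := fun h0 => by have := hlb1 0 h0; omega
  have hfgT : Nat.findGreatest (fun x => x ∉ T) (M - 1) ≤ g - 1 := by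
    by_contra hcon
    push_neg at hcon
    have h2 : Nat.findGreatest (fun x => x ∉ T) (M - 1) ≤ M - 1 := Nat.findGreatest_le _
    have h3 : Nat.findGreatest (fun x => x ∉ T) (M - 1) ∈ T :=
      (hmemT _).2 (Or.inr (Or.inl ⟨by omega, h2⟩))
    have h4 := Nat.findGreatest_spec (P := fun x => x ∉ T) (Nat.zero_le (M - 1)) h0T
    exact h4 h3
  have hA_T : t ≤ (M - 1) - Nat.findGreatest (fun x => x ∉ T) (M - 1) := by omega
  have hfrkT := frk_eq_A hneT htT hlb hM1T hub hA_T
  have hback : frk T = S := by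
    rw [hfrkT, show M - 1 - t + 1 = g by omega, show M - 1 - t + 2 = g + 1 by omega,
      show M - 1 + 1 = M by omega]
    ext x
    simp only [Finset.mem_union, Finset.mem_sdiff, Finset.mem_erase, Finset.mem_Icc]
    constructor
    · rintro (⟨⟨hxt, hxT⟩, hnI⟩ | ⟨h1, h2⟩)
      · rcases (hmemT x).1 hxT with ⟨hxS, _⟩ | h | h
        · exact hxS
        · exact absurd h hnI
        · exact absurd h hxt
      · exact hrun x (by omega) h2
    · intro hxS
      by_cases hxg : g + 1 ≤ x
      · exact Or.inr ⟨hxg, hMle x hxS⟩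
      · have hx1 : x < g := by
          have h3 : x ≠ g := fun e => hg (e ▸ hxS)
          omega
        have hxt : x ≠ t := fun e => by have := hsle x hxS; omega
        exact Or.inl ⟨⟨hxt, (hmemT x).2 (Or.inl ⟨hxS, hx1⟩)⟩, fun hc => by omega⟩
  rw [hfrk]
  exact ⟨⟨hsubT, hsum_T, hnfT⟩, hback, Or.inl hcard_T⟩

/-- main structural lemma: Franklin's involution works. -/
lemma frk_spec {n : ℕ} {S : Finset ℕ} (hn : 1 ≤ n)
    (hsub : S ⊆ Finset.Icc 1 n) (hsum : S.sum id = n) (hnf : ¬ isFix S) :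
    (frk S ⊆ Finset.Icc 1 n ∧ (frk S).sum id = n ∧ ¬ isFix (frk S)) ∧
      frk (frk S) = S ∧ ((frk S).card = S.card + 1 ∨ S.card = (frk S).card + 1) := by
  have hne : S.Nonempty := by
    rcases S.eq_empty_or_nonempty with rfl | h
    · simp at hsum; omega
    · exact h
  have h0 : (0 : ℕ) ∉ S := fun h => by have := Finset.mem_Icc.1 (hsub h); omega
  set M := S.max' hne with hM_def
  have hM : M ∈ S := S.max'_mem hne
  have hMle : ∀ x ∈ S, x ≤ M := fun x hx => S.le_max' x hx
  set s := S.min' hne with hs_def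
  have hs : s ∈ S := S.min'_mem hne
  have hsle : ∀ x ∈ S, s ≤ x := fun x hx => S.min'_le x hx
  set g := Nat.findGreatest (fun x => x ∉ S) M with hg_def
  have hg : g ∉ S := Nat.findGreatest_spec (P := fun x => x ∉ S) (Nat.zero_le M) h0
  have hgM : g ≤ M := Nat.findGreatest_le M
  have hrun : ∀ x, g < x → x ≤ M → x ∈ S := by
    intro x h1 h2
    by_contra hx
    exact Nat.findGreatest_is_greatest h1 h2 hx
  by_cases hA : s ≤ M - g
  · exact caseA_spec hne hsub hsum hs hsle hM hMle hgM hg hrun hA hnf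
  · exact caseB_spec hne hsub hsum hs hsle hM hMle hgM hg hrun (by omega) hnf

lemma mem_pA {n : ℕ} {S : Finset ℕ} : S ∈ pA n ↔ S ⊆ Finset.Icc 1 n ∧ S.sum id = n := by
  simp [pA, Finset.mem_filter, Finset.mem_powerset]

lemma sum_Icc_two (a : ℕ) : ∀ m : ℕ, ((Finset.Icc a (a + m)).sum id) * 2 = (2 * a + m) * (m + 1)
  | 0 => by simp [mul_comm]
  | (m + 1) => by
    have ih := sum_Icc_two a m
    have hins : Finset.Icc a (a + (m + 1)) = insert (a + (m + 1)) (Finset.Icc a (a + m)) := by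
      ext x
      simp only [Finset.mem_insert, Finset.mem_Icc]
      omega
    rw [hins, Finset.sum_insert (by simp only [Finset.mem_Icc]; omega)]
    have expand : (2 * a + (m + 1)) * (m + 1 + 1)
        = (2 * a + m) * (m + 1) + (a + (m + 1)) * 2 := by ring
    simp only [id_eq] at ih ⊢
    omega

lemma le_self_sq (k : ℕ) : k ≤ k ^ 2 := by nlinarith

lemma sum_IccA (k : ℕ) (hk : 1 ≤ k) : ((Finset.Icc k (2 * k - 1)).sum id) * 2 = 3 * k ^ 2 - k := by
  obtain ⟨m, rfl⟩ := Nat.exists_eq_add_of_le hk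
  have h := sum_Icc_two (1 + m) m
  rw [show 1 + m + m = 2 * (1 + m) - 1 by omega] at h
  rw [h]
  have hle : (1 + m) ≤ 3 * (1 + m) ^ 2 := by nlinarith
  zify [hle]
  ring

lemma sum_IccB (k : ℕ) (hk : 1 ≤ k) :
    ((Finset.Icc (k + 1) (2 * k)).sum id) * 2 = 3 * k ^ 2 + k := by
  obtain ⟨m, rfl⟩ := Nat.exists_eq_add_of_le hk
  have h := sum_Icc_two (1 + m + 1) m
  rw [show 1 + m + 1 + m = 2 * (1 + m) by omega] at h
  rw [h]
  ring

lemma pent_sub_iff (k n : ℕ) : 2 * n = 3 * k ^ 2 - k ↔ 2 * n + k = 3 * k ^ 2 := by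
  have := le_self_sq k
  omega

lemma uniqA {n k j : ℕ} (h1 : 2 * n + k = 3 * k ^ 2) (h2 : 2 * n + j = 3 * j ^ 2) : k = j := by
  by_contra hne
  rcases Nat.lt_or_ge k j with h | h
  · obtain ⟨d, rfl⟩ := Nat.exists_eq_add_of_lt h
    nlinarith
  · have h' : j < k := by omega
    obtain ⟨d, rfl⟩ := Nat.exists_eq_add_of_lt h'
    nlinarith

lemma uniqB {n k j : ℕ} (h1 : 2 * n = 3 * k ^ 2 + k) (h2 : 2 * n = 3 * j ^ 2 + j) : k = j := by
  by_contra hne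
  rcases Nat.lt_or_ge k j with h | h
  · obtain ⟨d, rfl⟩ := Nat.exists_eq_add_of_lt h
    nlinarith
  · have h' : j < k := by omega
    obtain ⟨d, rfl⟩ := Nat.exists_eq_add_of_lt h'
    nlinarith

lemma uniqAB {n k j : ℕ} (hn : 1 ≤ n) (h1 : 2 * n + k = 3 * k ^ 2) (h2 : 2 * n = 3 * j ^ 2 + j) :
    False := by
  have hk1 : 1 ≤ k := by
    rcases Nat.eq_zero_or_pos k with rfl | h
    · simp at h1; omega
    · exact h
  rcases Nat.lt_or_ge j k with h | h
  · obtain ⟨d, rfl⟩ := Nat.exists_eq_add_of_lt h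
    nlinarith
  · nlinarith

lemma e_bound {n k : ℕ} (h1 : 2 * n + k = 3 * k ^ 2) (hk : 1 ≤ k) : k < 2 * n + 2 := by
  have := le_self_sq k
  omega

lemma e_eq_pent1 {n k : ℕ} (hn : 1 ≤ n) (hk : 1 ≤ k) (h : 2 * n + k = 3 * k ^ 2) :
    e n = (-1) ^ (k + 1) := by
  rw [e]
  rw [Finset.sum_eq_single_of_mem k (Finset.mem_range.2 (e_bound h hk))]
  · rw [if_pos (Or.inl ((pent_sub_iff k n).2 h))]
  · intro b hb hbk
    rw [if_neg]
    rintro (h' | h')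
    · exact hbk (uniqA ((pent_sub_iff b n).1 h') h)
    · rcases Nat.eq_zero_or_pos b with rfl | hb1
      · simp at h'; omega
      · exact uniqAB hn h h'
  
lemma e_eq_pent2 {n k : ℕ} (hn : 1 ≤ n) (hk : 1 ≤ k) (h : 2 * n = 3 * k ^ 2 + k) :
    e n = (-1) ^ (k + 1) := by
  have hkn : k < 2 * n + 2 := by have := le_self_sq k; omega
  rw [e]
  rw [Finset.sum_eq_single_of_mem k (Finset.mem_range.2 hkn)]
  · rw [if_pos (Or.inr h)]
  · intro b hb hbk
    rw [if_neg]
    rintro (h' | h')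
    · rcases Nat.eq_zero_or_pos b with rfl | hb1
      · simp at h'; omega
      · exact uniqAB hn ((pent_sub_iff b n).1 h') h
    · exact hbk (uniqB h' h)

lemma e_eq_zero {n : ℕ} (hn : 1 ≤ n)
    (h : ∀ k, 1 ≤ k → 2 * n ≠ 3 * k ^ 2 - k ∧ 2 * n ≠ 3 * k ^ 2 + k) : e n = 0 := by
  rw [e]
  apply Finset.sum_eq_zero
  intro k _
  rw [if_neg]
  rintro (h' | h')
  · rcases Nat.eq_zero_or_pos k with rfl | hk1
    · simp at h'; omega
    · exact (h k hk1).1 h'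
  · rcases Nat.eq_zero_or_pos k with rfl | hk1
    · simp at h'; omega
    · exact (h k hk1).2 h'

lemma fixA_mem_pA {n k : ℕ} (hk : 1 ≤ k) (h : 2 * n + k = 3 * k ^ 2) :
    Finset.Icc k (2 * k - 1) ∈ pA n := by
  have hsum : (Finset.Icc k (2 * k - 1)).sum id = n := by
    have := sum_IccA k hk
    have := le_self_sq k
    omega
  refine mem_pA.2 ⟨subset_Icc_one ?_ hsum, hsum⟩
  intro x hx
  have := Finset.mem_Icc.1 hx
  omega

lemma fixB_mem_pA {n k : ℕ} (hk : 1 ≤ k) (h : 2 * n = 3 * k ^ 2 + k) :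
    Finset.Icc (k + 1) (2 * k) ∈ pA n := by
  have hsum : (Finset.Icc (k + 1) (2 * k)).sum id = n := by
    have := sum_IccB k hk
    omega
  refine mem_pA.2 ⟨subset_Icc_one ?_ hsum, hsum⟩
  intro x hx
  have := Finset.mem_Icc.1 hx
  omega

lemma sum_pA (n : ℕ) (hn : 1 ≤ n) :
    (∑ S ∈ pA n, (-1 : ℤ) ^ S.card) = - e n := by
  classical
  rw [← Finset.sum_filter_add_sum_filter_not (pA n) isFix (fun S => (-1 : ℤ) ^ S.card)]
  have hinv : (∑ S ∈ (pA n).filter (fun S => ¬ isFix S), (-1 : ℤ) ^ S.card) = 0 := by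
    apply Finset.sum_involution (g := fun S _ => frk S)
    · intro S hS
      obtain ⟨hmem, hnf⟩ := Finset.mem_filter.1 hS
      obtain ⟨hsub, hsum⟩ := mem_pA.1 hmem
      obtain ⟨_, _, hcard⟩ := frk_spec hn hsub hsum hnf
      rcases hcard with hc | hc
      · rw [hc, pow_succ]; ring
      · rw [hc, pow_succ]; ring
    · intro S hS _
      obtain ⟨hmem, hnf⟩ := Finset.mem_filter.1 hS
      obtain ⟨hsub, hsum⟩ := mem_pA.1 hmem
      obtain ⟨_, _, hcard⟩ := frk_spec hn hsub hsum hnf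
      intro he
      rw [he] at hcard
      omega
    · intro S hS
      obtain ⟨hmem, hnf⟩ := Finset.mem_filter.1 hS
      obtain ⟨hsub, hsum⟩ := mem_pA.1 hmem
      obtain ⟨⟨h1, h2, h3⟩, _, _⟩ := frk_spec hn hsub hsum hnf
      exact Finset.mem_filter.2 ⟨mem_pA.2 ⟨h1, h2⟩, h3⟩
    · intro S hS
      obtain ⟨hmem, hnf⟩ := Finset.mem_filter.1 hS
      obtain ⟨hsub, hsum⟩ := mem_pA.1 hmem
      obtain ⟨_, h, _⟩ := frk_spec hn hsub hsum hnf
      exact h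
  rw [hinv, add_zero]
  by_cases h1 : ∃ k, 1 ≤ k ∧ 2 * n + k = 3 * k ^ 2
  · obtain ⟨k, hk1, hk⟩ := h1
    have hfix : (pA n).filter isFix = {Finset.Icc k (2 * k - 1)} := by
      ext S
      simp only [Finset.mem_filter, Finset.mem_singleton]
      constructor
      · rintro ⟨hmem, j, hj1, rfl | rfl⟩
        · obtain ⟨_, hsum⟩ := mem_pA.1 hmem
          have h2 := sum_IccA j hj1
          have h3 : 2 * n + j = 3 * j ^ 2 := by omega
          rw [uniqA h3 hk]
        · obtain ⟨_, hsum⟩ := mem_pA.1 hmem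
          have h2 := sum_IccB j hj1
          exact absurd (uniqAB (j := j) hn hk (by omega)) (fun x => x)
      · rintro rfl
        exact ⟨fixA_mem_pA hk1 hk, ⟨k, hk1, Or.inl rfl⟩⟩
    rw [hfix, Finset.sum_singleton, Nat.card_Icc,
      show 2 * k - 1 + 1 - k = k by omega, e_eq_pent1 hn hk1 hk, pow_succ]
    ring
  · by_cases h2 : ∃ k, 1 ≤ k ∧ 2 * n = 3 * k ^ 2 + k
    · obtain ⟨k, hk1, hk⟩ := h2
      have hfix : (pA n).filter isFix = {Finset.Icc (k + 1) (2 * k)} := by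
        ext S
        simp only [Finset.mem_filter, Finset.mem_singleton]
        constructor
        · rintro ⟨hmem, j, hj1, rfl | rfl⟩
          · obtain ⟨_, hsum⟩ := mem_pA.1 hmem
            have h2 := sum_IccA j hj1
            exact absurd (uniqAB (k := j) hn (by omega) hk) (fun x => x)
          · obtain ⟨_, hsum⟩ := mem_pA.1 hmem
            have h2 := sum_IccB j hj1
            rw [uniqB (k := j) (by omega) hk]
        · rintro rfl
          exact ⟨fixB_mem_pA hk1 hk, ⟨k, hk1, Or.inr rfl⟩⟩
      rw [hfix, Finset.sum_singleton, Nat.card_Icc,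
        show 2 * k + 1 - (k + 1) = k by omega, e_eq_pent2 hn hk1 hk, pow_succ]
      ring
    · have hfix : (pA n).filter isFix = ∅ := by
        ext S
        simp only [Finset.mem_filter, Finset.notMem_empty, iff_false]
        rintro ⟨hmem, j, hj1, rfl | rfl⟩
        · obtain ⟨_, hsum⟩ := mem_pA.1 hmem
          have h3 := sum_IccA j hj1
          exact h1 ⟨j, hj1, by omega⟩
        · obtain ⟨_, hsum⟩ := mem_pA.1 hmem
          have h3 := sum_IccB j hj1
          exact h2 ⟨j, hj1, by omega⟩
      rw [hfix, Finset.sum_empty, e_eq_zero hn, neg_zero]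
      intro k hk
      constructor
      · intro hc
        exact h1 ⟨k, hk, (pent_sub_iff k n).1 hc⟩
      · intro hc
        exact h2 ⟨k, hk, hc⟩

lemma coeff_prod_pA (m : ℕ) :
    (∏ i ∈ Finset.Icc 1 m, (1 - Polynomial.X ^ i : Polynomial ℤ)).coeff m
      = ∑ S ∈ pA m, (-1 : ℤ) ^ S.card := by
  classical
  have hexp : ∏ i ∈ Finset.Icc 1 m, (1 - Polynomial.X ^ i : Polynomial ℤ)
      = ∑ t ∈ (Finset.Icc 1 m).powerset,
          Polynomial.C ((-1 : ℤ) ^ t.card) * Polynomial.X ^ (t.sum id) := by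
    have h := Finset.prod_add (fun i => -(Polynomial.X ^ i) : ℕ → Polynomial ℤ)
      (fun _ => (1 : Polynomial ℤ)) (Finset.Icc 1 m)
    simp only [Finset.prod_const_one, mul_one] at h
    have hlhs : ∀ i : ℕ, -(Polynomial.X ^ i : Polynomial ℤ) + 1 = 1 - Polynomial.X ^ i := by
      intro i; ring
    simp only [hlhs] at h
    rw [h]
    apply Finset.sum_congr rfl
    intro t _
    rw [show (fun i => -(Polynomial.X ^ i : Polynomial ℤ)) = fun i =>
        (-1 : Polynomial ℤ) * Polynomial.X ^ i from funext fun i => by ring]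
    rw [Finset.prod_mul_distrib, Finset.prod_const, Finset.prod_pow_eq_pow_sum]
    congr 1
    simp
  rw [hexp, Polynomial.finset_sum_coeff]
  have hterm : ∀ t : Finset ℕ,
      (Polynomial.C ((-1 : ℤ) ^ t.card) * Polynomial.X ^ (t.sum id)).coeff m
        = if t.sum id = m then (-1 : ℤ) ^ t.card else 0 := by
    intro t
    rw [Polynomial.coeff_C_mul, Polynomial.coeff_X_pow]
    by_cases h : t.sum id = m
    · rw [if_pos h.symm, if_pos h, mul_one]
    · rw [if_neg (fun e => h e.symm), if_neg h, mul_zero]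
  simp only [hterm]
  rw [pA, Finset.sum_filter]

theorem c_diff_eq_e (j : ℕ) (hj : 1 ≤ j) : c j - c (j - 1) = e j := by
  rcases eq_or_lt_of_le hj with h1 | h2
  · -- j = 1
    rw [← h1]
    have hIcc1 : Finset.Icc 2 1 = (∅ : Finset ℕ) := Finset.Icc_eq_empty (by omega)
    have hIcc0 : Finset.Icc 2 0 = (∅ : Finset ℕ) := Finset.Icc_eq_empty (by omega)
    have hc1 : c 1 = 0 := by
      rw [c, hIcc1, Finset.prod_empty, Polynomial.coeff_one]
      norm_num
    have hc0 : c 0 = -1 := by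
      rw [c]
      norm_num [hIcc0]
    have he1 : e 1 = 1 := by
      have := e_eq_pent1 (n := 1) (k := 1) le_rfl le_rfl (by norm_num)
      simpa using this
    rw [hc1, hc0, he1]
    ring
  · -- j ≥ 2
    obtain ⟨m, rfl⟩ : ∃ m, j = m + 1 := ⟨j - 1, by omega⟩
    have hm1 : 1 ≤ m := by omega
    simp only [Nat.add_sub_cancel]
    set P := ∏ i ∈ Finset.Icc 2 m, (1 - Polynomial.X ^ i : Polynomial ℤ) with hP
    set Q := ∏ i ∈ Finset.Icc 2 (m + 1), (1 - Polynomial.X ^ i : Polynomial ℤ) with hQdef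
    have hIccins : Finset.Icc 2 (m + 1) = insert (m + 1) (Finset.Icc 2 m) := by
      ext x
      simp only [Finset.mem_insert, Finset.mem_Icc]
      omega
    have hQ : Q = (1 - Polynomial.X ^ (m + 1)) * P := by
      rw [hQdef, hIccins, Finset.prod_insert (by simp only [Finset.mem_Icc]; omega)]
    have hcoeffQ : Q.coeff m = P.coeff m := by
      rw [hQ, sub_mul, one_mul, Polynomial.coeff_sub]
      have h0 : (Polynomial.X ^ (m + 1) * P).coeff m = 0 := by
        rw [Polynomial.X_pow_mul, Polynomial.coeff_mul_X_pow', if_neg (by omega)]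
      rw [h0, sub_zero]
    have hIccins1 : Finset.Icc 1 (m + 1) = insert 1 (Finset.Icc 2 (m + 1)) := by
      ext x
      simp only [Finset.mem_insert, Finset.mem_Icc]
      omega
    have hF : (∏ i ∈ Finset.Icc 1 (m + 1), (1 - Polynomial.X ^ i : Polynomial ℤ)).coeff (m + 1)
        = Q.coeff (m + 1) - Q.coeff m := by
      rw [hIccins1, Finset.prod_insert (by simp only [Finset.mem_Icc]; omega), pow_one,
        sub_mul, one_mul, Polynomial.coeff_sub, Polynomial.coeff_X_mul]
    have hsum := sum_pA (m + 1) (by omega)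
    rw [coeff_prod_pA (m + 1)] at hF
    have hcj : c (m + 1) = - Q.coeff (m + 1) := by rw [c]
    have hcj1 : c m = - P.coeff m := by rw [c]
    rw [hcj, hcj1, ← hcoeffQ]
    have hfin : Q.coeff (m + 1) - Q.coeff m = - e (m + 1) := by rw [← hF, hsum]
    linarith [hfin]
end

section
/- For every natural number j ≥ 2, (O₂(j) − E₂(j)) − (O₂(j−1) − E₂(j−1)) = e(j). -/
/-- Partitions of `j` into distinct parts, each at least 2, with an odd number of parts. -/
noncomputable def O2 (j : ℕ) : ℕ :=
  Nat.card {P : Nat.Partition j //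
    P.parts.Nodup ∧ (∀ x ∈ P.parts, 2 ≤ x) ∧ Odd (Multiset.card P.parts)}
/-- Partitions of `j` into distinct parts, each at least 2, with an even number of parts. -/
noncomputable def E2 (j : ℕ) : ℕ :=
  Nat.card {P : Nat.Partition j //
    P.parts.Nodup ∧ (∀ x ∈ P.parts, 2 ≤ x) ∧ Even (Multiset.card P.parts)}

open Finset

namespace Franklin

lemma sum_Icc_id_mul_two' {b c : ℕ} (hb : 1 ≤ b) (h : b ≤ c) :
    (∑ x ∈ Icc b c, x) * 2 = (b + c) * (c + 1 - b) := by
  have h1 : (∑ x ∈ range b, x) + ∑ x ∈ Ico b (c+1), x = ∑ x ∈ range (c+1), x := by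
    rw [Finset.range_eq_Ico, Finset.range_eq_Ico]
    exact Finset.sum_Ico_consecutive (fun x : ℕ => x) (k := c+1) (Nat.zero_le b) (by omega)
  have h0 : Ico b (c+1) = Icc b c := by ext x; simp [mem_Ico, mem_Icc, Nat.lt_succ_iff]
  rw [h0] at h1
  have h2 := Finset.sum_range_id_mul_two b
  have h3 := Finset.sum_range_id_mul_two (c+1)
  simp only [Nat.add_sub_cancel] at h3
  zify [show b ≤ c + 1 by omega, show 1 ≤ b from hb] at h1 h2 h3 ⊢
  linear_combination 2 * h1 + h3 - h2

/-- largest part -/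
def fa (P : Finset ℕ) : ℕ := P.sup id
/-- smallest part -/
noncomputable def fs (P : Finset ℕ) : ℕ := sInf (P : Set ℕ)
/-- staircase length at the top -/
noncomputable def ft (P : Finset ℕ) : ℕ := sInf {i | fa P - i ∉ P}

def pent (P : Finset ℕ) : Prop := ft P = P.card ∧ (fs P = ft P ∨ fs P = ft P + 1)

def DD (j : ℕ) : Finset (Finset ℕ) :=
  (range (j+1)).powerset.filter fun P => 0 ∉ P ∧ ∑ x ∈ P, x = j

lemma mem_DD {j : ℕ} {P : Finset ℕ} :
    P ∈ DD j ↔ (∀ x ∈ P, x ≤ j) ∧ 0 ∉ P ∧ ∑ x ∈ P, x = j := by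
  simp only [DD, mem_filter, mem_powerset, subset_iff, mem_range, Nat.lt_succ_iff]

variable {P : Finset ℕ} {x : ℕ}

lemma le_fa (hx : x ∈ P) : x ≤ fa P := Finset.le_sup (f := id) hx

lemma fa_mem (hne : P.Nonempty) : fa P ∈ P := by
  obtain ⟨i, hi, he⟩ := Finset.exists_mem_eq_sup P hne id
  rw [fa, he]; exact hi

lemma fs_le (hx : x ∈ P) : fs P ≤ x := Nat.sInf_le hx

lemma fs_mem (hne : P.Nonempty) : fs P ∈ P := by
  obtain ⟨x, hx⟩ := hne
  exact Nat.sInf_mem ⟨x, hx⟩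

lemma fs_le_fa (hne : P.Nonempty) : fs P ≤ fa P := fs_le (fa_mem hne)

lemma ft_not_mem (h0 : 0 ∉ P) : fa P - ft P ∉ P := by
  have h : fa P ∈ {i | fa P - i ∉ P} := by simpa using h0
  exact Nat.sInf_mem ⟨fa P, h⟩

lemma ft_mem {i : ℕ} (hi : i < ft P) : fa P - i ∈ P := by
  by_contra h
  have hle : ft P ≤ i := Nat.sInf_le (show i ∈ {i | fa P - i ∉ P} from h)
  omega

lemma ft_pos (hne : P.Nonempty) (h0 : 0 ∉ P) : 1 ≤ ft P := by
  rcases Nat.eq_zero_or_pos (ft P) with h | h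
  · have := ft_not_mem h0 (P := P)
    rw [h, Nat.sub_zero] at this
    exact absurd (fa_mem hne) this
  · exact h

lemma ft_le_fa (h0 : 0 ∉ P) : ft P ≤ fa P := by
  have h : fa P ∈ {i | fa P - i ∉ P} := by simpa using h0
  exact Nat.sInf_le h

lemma stair_subset (h0 : 0 ∉ P) : Icc (fa P - ft P + 1) (fa P) ⊆ P := by
  intro x hx
  rw [mem_Icc] at hx
  have hle := ft_le_fa h0 (P := P)
  have h1 : fa P - (fa P - x) = x := by omega
  have h2 : fa P - x < ft P := by omega
  rw [← h1]; exact ft_mem h2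

lemma subset_Icc_fs_fa : P ⊆ Icc (fs P) (fa P) := fun x hx => mem_Icc.2 ⟨fs_le hx, le_fa hx⟩

lemma card_le_interval (hne : P.Nonempty) : P.card ≤ fa P - fs P + 1 := by
  have := Finset.card_le_card (subset_Icc_fs_fa (P := P))
  rwa [Nat.card_Icc, Nat.sub_add_comm (fs_le_fa hne)] at this

lemma ft_le_card (h0 : 0 ∉ P) : ft P ≤ P.card := by
  have h := Finset.card_le_card (stair_subset h0 (P := P))
  rwa [Nat.card_Icc, show fa P + 1 - (fa P - ft P + 1) = ft P by
    have := ft_le_fa h0 (P := P); omega] at h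

lemma pos_of_mem (h0 : 0 ∉ P) (hx : x ∈ P) : 1 ≤ x := by
  rcases Nat.eq_zero_or_pos x with h | h
  · subst h; exact absurd hx h0
  · exact h

/-- if `t = m` then `P` is the staircase interval -/
lemma eq_stair_of_ft_eq_card (h0 : 0 ∉ P) (h : ft P = P.card) :
    P = Icc (fa P - ft P + 1) (fa P) := by
  refine (Finset.eq_of_subset_of_card_le (stair_subset h0) ?_).symm
  rw [Nat.card_Icc, show fa P + 1 - (fa P - ft P + 1) = ft P by
    have := ft_le_fa h0 (P := P); omega, h]

lemma fs_of_eq_Icc {b c : ℕ} (hbc : b ≤ c) (h : P = Icc b c) : fs P = b := by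
  subst h
  have h1 : b ∈ Icc b c := mem_Icc.2 ⟨le_rfl, hbc⟩
  have h2 := fs_le h1
  have h3 := fs_mem (P := Icc b c) ⟨b, h1⟩
  rw [mem_Icc] at h3
  omega

lemma fa_of_eq_Icc {b c : ℕ} (hbc : b ≤ c) (h : P = Icc b c) : fa P = c := by
  subst h
  have h1 : c ∈ Icc b c := mem_Icc.2 ⟨hbc, le_rfl⟩
  have h2 := le_fa h1
  have h3 := fa_mem (P := Icc b c) ⟨c, h1⟩
  rw [mem_Icc] at h3
  omega

lemma ft_of_eq_Icc {b c : ℕ} (hb : 1 ≤ b) (hbc : b ≤ c) (h : P = Icc b c) :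
    ft P = c - b + 1 := by
  subst h
  have hfa : fa (Icc b c) = c := fa_of_eq_Icc hbc rfl
  have h0 : (0 : ℕ) ∉ Icc b c := by rw [mem_Icc]; omega
  have hmem : (c - b + 1) ∈ {i | fa (Icc b c) - i ∉ Icc b c} := by
    simp only [Set.mem_setOf_eq, hfa, mem_Icc]; omega
  have h1 : ft (Icc b c) ≤ c - b + 1 := Nat.sInf_le hmem
  have h2 := ft_not_mem h0
  have h3 := ft_le_fa h0 (P := Icc b c)
  rw [hfa, mem_Icc] at h2
  rw [hfa] at h3
  omega

lemma pent_interval (h0 : 0 ∉ P) (hne : P.Nonempty) (hp : pent P) :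
    P = Icc (fs P) (fa P) ∧ fs P = fa P - ft P + 1 := by
  have h := eq_stair_of_ft_eq_card h0 hp.1
  have hfs : fs P = fa P - ft P + 1 := by
    have hle := ft_le_fa h0 (P := P)
    have hpos := pos_of_mem h0 (fa_mem hne)
    have htp := ft_pos hne h0
    exact fs_of_eq_Icc (by omega) h
  exact ⟨by rw [hfs]; exact h, hfs⟩

lemma fa_eq_of {k : ℕ} (hmem : k ∈ P) (hub : ∀ x ∈ P, x ≤ k) : fa P = k :=
  le_antisymm (Finset.sup_le hub) (le_fa hmem)

lemma fs_eq_of {k : ℕ} (hmem : k ∈ P) (hlb : ∀ x ∈ P, k ≤ x) : fs P = k :=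
  le_antisymm (fs_le hmem) (hlb _ (fs_mem ⟨k, hmem⟩))

lemma ft_eq_of {k : ℕ} (h1 : ∀ i < k, fa P - i ∈ P) (h2 : fa P - k ∉ P) : ft P = k := by
  refine le_antisymm (Nat.sInf_le h2) ?_
  by_contra hc
  push_neg at hc
  have h3 : fa P - ft P ∈ P := h1 _ hc
  exact absurd h3 (Nat.sInf_mem (⟨k, h2⟩ : Set.Nonempty {i | fa P - i ∉ P}))

lemma ft_ge_of {k : ℕ} (h0 : 0 ∉ P) (h1 : ∀ i < k, fa P - i ∈ P) : k ≤ ft P := by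
  by_contra hc
  push_neg at hc
  exact absurd (h1 _ hc) (ft_not_mem h0)

lemma pair_le_sum (h0 : 0 ∉ P) (hc : 2 ≤ P.card) : fs P + fa P ≤ ∑ x ∈ P, x := by
  have hne : P.Nonempty := Finset.card_pos.1 (by omega)
  have hne' : fs P ≠ fa P := by
    intro h
    have : P ⊆ {fs P} := by
      intro x hx
      have h1 := fs_le hx
      have h2 := le_fa hx
      simp only [mem_singleton]
      omega
    have := Finset.card_le_card this
    simp at this
    omega
  calc fs P + fa P = ∑ x ∈ ({fs P, fa P} : Finset ℕ), x := by
        rw [Finset.sum_pair hne']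
    _ ≤ ∑ x ∈ P, x := Finset.sum_le_sum_of_subset (by
        intro x hx
        simp only [mem_insert, mem_singleton] at hx
        rcases hx with h | h <;> subst h
        · exact fs_mem hne
        · exact fa_mem hne)

section MoveA

noncomputable def moveA (P : Finset ℕ) : Finset ℕ :=
  (P.erase (fs P)).image fun x => if fa P - fs P < x then x + 1 else x

variable (h0 : 0 ∉ P) (hne : P.Nonempty)

include h0 hne in
lemma two_fs_le_fa (hst : fs P ≤ ft P) (hnp : ¬ pent P) : 2 * fs P ≤ fa P := by
  by_contra hc
  push_neg at hc
  have hle := ft_le_fa h0 (P := P)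
  have hpos := ft_pos hne h0
  have hsub : Icc (fa P - ft P + 1) (fa P) ⊆ P := stair_subset h0
  have h1 : P ⊆ Icc (fa P - ft P + 1) (fa P) := by
    intro x hx
    have hx1 := fs_le hx
    have hx2 := le_fa hx
    rw [mem_Icc]
    omega
  have hPeq : P = Icc (fa P - ft P + 1) (fa P) := Finset.Subset.antisymm h1 hsub
  have hfs : fs P = fa P - ft P + 1 := fs_of_eq_Icc (by omega) hPeq
  have hcard : P.card = ft P := by
    have h2 := congrArg Finset.card hPeq
    rw [Nat.card_Icc] at h2
    omega
  exact hnp ⟨hcard.symm, Or.inl (by omega)⟩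

variable (hst : fs P ≤ ft P) (h2fs : 2 * fs P ≤ fa P)

include h0 hne hst h2fs in
lemma memA {x : ℕ} : x ∈ moveA P ↔
    (x ∈ P ∧ x ≠ fs P ∧ x ≤ fa P - fs P) ∨ (fa P - fs P + 2 ≤ x ∧ x ≤ fa P + 1) := by
  have hle := ft_le_fa h0 (P := P)
  have hspos := pos_of_mem h0 (fs_mem hne)
  have hstair : Icc (fa P - fs P + 1) (fa P) ⊆ P := fun y hy => by
    apply stair_subset h0
    rw [mem_Icc] at hy ⊢
    omega
  simp only [moveA, mem_image, mem_erase]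
  constructor
  · rintro ⟨y, ⟨hyne, hyP⟩, rfl⟩
    have hy2 := le_fa hyP
    by_cases hcase : fa P - fs P < y
    · right
      rw [if_pos hcase]
      omega
    · left
      rw [if_neg hcase]
      exact ⟨hyP, hyne, by omega⟩
  · rintro (⟨hxP, hxne, hxle⟩ | ⟨hx1, hx2⟩)
    · exact ⟨x, ⟨hxne, hxP⟩, by rw [if_neg (by omega)]⟩
    · refine ⟨x - 1, ⟨by omega, hstair (by rw [mem_Icc]; omega)⟩, ?_⟩
      rw [if_pos (by omega)]
      omega

include h0 hne hst h2fs in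
lemma sumA : ∑ x ∈ moveA P, x = ∑ x ∈ P, x := by
  have hle := ft_le_fa h0 (P := P)
  have hspos := pos_of_mem h0 (fs_mem hne)
  have hstair : Icc (fa P - fs P + 1) (fa P) ⊆ P := fun y hy => by
    apply stair_subset h0
    rw [mem_Icc] at hy ⊢
    omega
  have hinj : ∀ u ∈ P.erase (fs P), ∀ v ∈ P.erase (fs P),
      (if fa P - fs P < u then u + 1 else u) = (if fa P - fs P < v then v + 1 else v) → u = v := by
    intro u _ v _ h
    split_ifs at h <;> omega
  rw [moveA, Finset.sum_image hinj]
  have hsplit : ∀ y ∈ P.erase (fs P),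
      (if fa P - fs P < y then y + 1 else y) = y + (if fa P - fs P < y then 1 else 0) := by
    intro y _
    split_ifs <;> omega
  rw [Finset.sum_congr rfl hsplit, Finset.sum_add_distrib, ← Finset.sum_filter]
  have hfilter : (P.erase (fs P)).filter (fun y => fa P - fs P < y) = Icc (fa P - fs P + 1) (fa P) := by
    ext y
    simp only [mem_filter, mem_erase, mem_Icc]
    constructor
    · rintro ⟨⟨hne', hyP⟩, hlt⟩
      exact ⟨by omega, le_fa hyP⟩
    · intro hy
      have hyP := hstair (mem_Icc.2 hy)
      exact ⟨⟨by omega, hyP⟩, by omega⟩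
  rw [hfilter]
  simp only [Finset.sum_const, smul_eq_mul, mul_one, Nat.card_Icc, Finset.sum_const_nat fun _ _ => rfl]
  have hcard : fa P + 1 - (fa P - fs P + 1) = fs P := by omega
  rw [hcard]
  rw [← Finset.add_sum_erase P _ (fs_mem hne)]
  omega

include hne in
lemma cardA : (moveA P).card + 1 = P.card := by
  have hinj : ∀ u ∈ P.erase (fs P), ∀ v ∈ P.erase (fs P),
      (if fa P - fs P < u then u + 1 else u) = (if fa P - fs P < v then v + 1 else v) → u = v := by
    intro u _ v _ h
    split_ifs at h <;> omega
  rw [moveA, Finset.card_image_of_injOn hinj, Finset.card_erase_add_one (fs_mem hne)]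

include h0 hne hst h2fs in
lemma faA : fa (moveA P) = fa P + 1 := by
  have hspos := pos_of_mem h0 (fs_mem hne)
  have hle := fs_le_fa hne
  apply fa_eq_of
  · rw [memA h0 hne hst h2fs]
    right
    omega
  · intro x hx
    rw [memA h0 hne hst h2fs] at hx
    rcases hx with ⟨_, _, h⟩ | ⟨_, h⟩ <;> omega

include h0 hne hst h2fs in
lemma zeroA : 0 ∉ moveA P := by
  rw [memA h0 hne hst h2fs]
  push_neg
  constructor
  · intro h; exact absurd h h0
  · intro h; omega

include h0 hne hst h2fs in
lemma neA : (moveA P).Nonempty := by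
  refine ⟨fa P + 1, ?_⟩
  rw [memA h0 hne hst h2fs]
  have hspos := pos_of_mem h0 (fs_mem hne)
  have hle := fs_le_fa hne
  right
  omega

include h0 hne hst h2fs in
lemma fsA : fs P + 1 ≤ fs (moveA P) := by
  have h := fs_mem (neA h0 hne hst h2fs)
  rw [memA h0 hne hst h2fs] at h
  have hspos := pos_of_mem h0 (fs_mem hne)
  rcases h with ⟨hP, hne', _⟩ | ⟨h1, _⟩
  · have := fs_le hP
    omega
  · omega

include h0 hne hst h2fs in
lemma ftA : ft (moveA P) = fs P := by
  have hle := fs_le_fa hne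
  have hspos := pos_of_mem h0 (fs_mem hne)
  have hfa := faA h0 hne hst h2fs
  apply ft_eq_of
  · intro i hi
    rw [hfa, memA h0 hne hst h2fs]
    right
    omega
  · rw [hfa, memA h0 hne hst h2fs]
    push_neg
    constructor
    · intro h _; omega
    · intro h; omega

include h0 hne hst h2fs in
lemma pentA : ¬ pent (moveA P) := by
  intro hp
  have hQ0 := zeroA h0 hne hst h2fs
  have hQne := neA h0 hne hst h2fs
  have hft := ftA h0 hne hst h2fs
  have hfs := fsA h0 hne hst h2fs
  have hfa := faA h0 hne hst h2fs
  obtain ⟨hQint, hQfs⟩ := pent_interval hQ0 hQne hp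
  obtain ⟨hp1, hp2⟩ := hp
  have hle := fs_le_fa hne
  rcases hp2 with h | h
  · omega
  · -- fs Q = ft Q + 1 = fs P + 1, and fs Q = fa Q - ft Q + 1 = fa P + 1 - fs P + 1
    rw [hft, hfa] at hQfs
    omega

end MoveA

section MoveB

noncomputable def moveB (P : Finset ℕ) : Finset ℕ :=
  insert (ft P) (P.image fun x => if fa P - ft P < x then x - 1 else x)

variable (h0 : 0 ∉ P) (hne : P.Nonempty)

include h0 hne in
lemma fa_ge_two_ft (hts : ft P < fs P) (hnp : ¬ pent P) : 2 * ft P + 1 ≤ fa P := by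
  have hle := ft_le_fa h0 (P := P)
  have hpos := ft_pos hne h0
  have hnm := ft_not_mem h0 (P := P)
  by_cases hcase : fa P - ft P + 1 ≤ fs P
  · -- P is the staircase
    have hsub : Icc (fa P - ft P + 1) (fa P) ⊆ P := stair_subset h0
    have h1 : P ⊆ Icc (fa P - ft P + 1) (fa P) := by
      intro x hx
      have hx1 := fs_le hx
      have hx2 := le_fa hx
      rw [mem_Icc]
      omega
    have hPeq : P = Icc (fa P - ft P + 1) (fa P) := Finset.Subset.antisymm h1 hsub
    have hfs : fs P = fa P - ft P + 1 := fs_of_eq_Icc (by omega) hPeq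
    have hcard : P.card = ft P := by
      have h2 := congrArg Finset.card hPeq
      rw [Nat.card_Icc] at h2
      omega
    have hne2 : fa P ≠ 2 * ft P := by
      intro h
      exact hnp ⟨hcard.symm, Or.inr (by omega)⟩
    omega
  · push_neg at hcase
    have hfsne : fs P ≠ fa P - ft P := fun h => hnm (h ▸ fs_mem hne)
    omega

variable (hts : ft P < fs P) (h2ft : 2 * ft P + 1 ≤ fa P)

include h0 hne hts h2ft in
lemma memB {x : ℕ} : x ∈ moveB P ↔
    x = ft P ∨ (x ∈ P ∧ x < fa P - ft P) ∨ (fa P - ft P ≤ x ∧ x ≤ fa P - 1) := by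
  have hle := ft_le_fa h0 (P := P)
  have hnm := ft_not_mem h0 (P := P)
  have hpos := ft_pos hne h0
  have hstair := stair_subset h0 (P := P)
  simp only [moveB, mem_insert, mem_image]
  constructor
  · rintro (rfl | ⟨y, hyP, rfl⟩)
    · left; rfl
    · have hy2 := le_fa hyP
      have hyne : y ≠ fa P - ft P := fun h => hnm (h ▸ hyP)
      by_cases hcase : fa P - ft P < y
      · right; right
        rw [if_pos hcase]
        omega
      · right; left
        rw [if_neg hcase]
        exact ⟨hyP, by omega⟩
  · rintro (rfl | ⟨hxP, hxlt⟩ | ⟨hx1, hx2⟩)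
    · left; rfl
    · right
      exact ⟨x, hxP, by rw [if_neg (by omega)]⟩
    · right
      refine ⟨x + 1, hstair (by rw [mem_Icc]; omega), ?_⟩
      rw [if_pos (by omega)]
      omega

include h0 in
lemma injB : ∀ u ∈ P, ∀ v ∈ P,
    (if fa P - ft P < u then u - 1 else u) = (if fa P - ft P < v then v - 1 else v) → u = v := by
  have hnm := ft_not_mem h0 (P := P)
  intro u hu v hv h
  split_ifs at h with h1 h2 h2
  · omega
  · exfalso
    have hv' : v = fa P - ft P := by omega
    exact hnm (hv' ▸ hv)
  · exfalso
    have hu' : u = fa P - ft P := by omega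
    exact hnm (hu' ▸ hu)
  · omega

include h0 hne hts h2ft in
lemma ft_not_mem_image : ft P ∉ P.image fun x => if fa P - ft P < x then x - 1 else x := by
  intro h
  rw [mem_image] at h
  obtain ⟨y, hyP, hy⟩ := h
  have := fs_le hyP
  have := le_fa hyP
  split_ifs at hy <;> omega

include h0 hne hts h2ft in
lemma cardB : (moveB P).card = P.card + 1 := by
  rw [moveB, Finset.card_insert_of_notMem (ft_not_mem_image h0 hne hts h2ft),
    Finset.card_image_of_injOn (injB h0)]

include h0 hne hts h2ft in
lemma sumB : ∑ x ∈ moveB P, x = ∑ x ∈ P, x := by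
  have hle := ft_le_fa h0 (P := P)
  have hpos := ft_pos hne h0
  have hnm := ft_not_mem h0 (P := P)
  have hstair := stair_subset h0 (P := P)
  rw [moveB, Finset.sum_insert (ft_not_mem_image h0 hne hts h2ft),
    Finset.sum_image (injB h0)]
  have hsplit : ∀ y ∈ P, (if fa P - ft P < y then y - 1 else y) + (if fa P - ft P < y then 1 else 0) = y := by
    intro y hy
    split_ifs <;> omega
  have h1 : ∑ y ∈ P, (if fa P - ft P < y then y - 1 else y)
      + ∑ y ∈ P, (if fa P - ft P < y then 1 else 0) = ∑ y ∈ P, y := by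
    rw [← Finset.sum_add_distrib]
    exact Finset.sum_congr rfl hsplit
  have hfilter : P.filter (fun y => fa P - ft P < y) = Icc (fa P - ft P + 1) (fa P) := by
    ext y
    simp only [mem_filter, mem_Icc]
    constructor
    · rintro ⟨hyP, hlt⟩
      exact ⟨by omega, le_fa hyP⟩
    · intro hy
      exact ⟨hstair (mem_Icc.2 hy), by omega⟩
  rw [← Finset.sum_filter, hfilter] at h1
  simp only [Finset.sum_const, smul_eq_mul, mul_one, Nat.card_Icc] at h1
  omega

include h0 hne hts h2ft in
lemma zeroB : 0 ∉ moveB P := by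
  rw [memB h0 hne hts h2ft]
  push_neg
  have hpos := ft_pos hne h0
  refine ⟨by omega, fun h => absurd h h0, by omega⟩

lemma neB : (moveB P).Nonempty := ⟨ft P, by rw [moveB]; exact mem_insert_self _ _⟩

include h0 hne hts h2ft in
lemma faB : fa (moveB P) = fa P - 1 := by
  have hle := ft_le_fa h0 (P := P)
  have hpos := ft_pos hne h0
  apply fa_eq_of
  · rw [memB h0 hne hts h2ft]
    right; right
    omega
  · intro x hx
    rw [memB h0 hne hts h2ft] at hx
    rcases hx with rfl | ⟨hxP, hlt⟩ | ⟨_, h⟩ <;> omega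

include h0 hne hts h2ft in
lemma fsB : fs (moveB P) = ft P := by
  apply fs_eq_of
  · rw [memB h0 hne hts h2ft]
    left; rfl
  · intro x hx
    rw [memB h0 hne hts h2ft] at hx
    rcases hx with rfl | ⟨hxP, _⟩ | ⟨h, _⟩
    · exact le_rfl
    · have := fs_le hxP; omega
    · omega

include h0 hne hts h2ft in
lemma ftB : ft P ≤ ft (moveB P) := by
  apply ft_ge_of (zeroB h0 hne hts h2ft)
  intro i hi
  rw [faB h0 hne hts h2ft, memB h0 hne hts h2ft]
  right; right
  omega

include h0 hne hts h2ft in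
lemma pentB : ¬ pent (moveB P) := by
  intro hp
  have hft := ftB h0 hne hts h2ft
  have hfs := fsB h0 hne hts h2ft
  have hcard := cardB h0 hne hts h2ft
  have htlec := ft_le_card h0 (P := P)
  obtain ⟨hp1, hp2⟩ := hp
  rcases hp2 with h | h <;> omega

end MoveB

section Comp

variable (h0 : 0 ∉ P) (hne : P.Nonempty)

include h0 hne in
lemma moveB_moveA (hst : fs P ≤ ft P) (hnp : ¬ pent P) : moveB (moveA P) = P := by
  have h2fs := two_fs_le_fa h0 hne hst hnp
  have hQ0 := zeroA h0 hne hst h2fs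
  have hQne := neA h0 hne hst h2fs
  have hft := ftA h0 hne hst h2fs
  have hfs := fsA h0 hne hst h2fs
  have hfa := faA h0 hne hst h2fs
  have htsQ : ft (moveA P) < fs (moveA P) := by omega
  have hle := fs_le_fa hne
  have hspos := pos_of_mem h0 (fs_mem hne)
  have h2ftQ : 2 * ft (moveA P) + 1 ≤ fa (moveA P) := by omega
  have hstair : Icc (fa P - fs P + 1) (fa P) ⊆ P := fun y hy => by
    have := ft_le_fa h0 (P := P)
    apply stair_subset h0
    rw [mem_Icc] at hy ⊢
    omega
  ext x
  rw [memB hQ0 hQne htsQ h2ftQ, hft, hfa, memA h0 hne hst h2fs]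
  constructor
  · rintro (rfl | ⟨hQ, hlt⟩ | ⟨h1, h2⟩)
    · exact fs_mem hne
    · rcases hQ with ⟨hP, _, _⟩ | ⟨ha, hb⟩
      · exact hP
      · omega
    · exact hstair (mem_Icc.2 (by omega))
  · intro hxP
    have hx1 := fs_le hxP
    have hx2 := le_fa hxP
    by_cases hc1 : x = fs P
    · exact Or.inl hc1
    · by_cases hc2 : x ≤ fa P - fs P
      · exact Or.inr (Or.inl ⟨Or.inl ⟨hxP, hc1, hc2⟩, by omega⟩)
      · exact Or.inr (Or.inr (by omega))

include h0 hne in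
lemma moveA_moveB (hts : ft P < fs P) (hnp : ¬ pent P) : moveA (moveB P) = P := by
  have h2ft := fa_ge_two_ft h0 hne hts hnp
  have hQ0 := zeroB h0 hne hts h2ft
  have hQne := neB (P := P)
  have hft := ftB h0 hne hts h2ft
  have hfs := fsB h0 hne hts h2ft
  have hfa := faB h0 hne hts h2ft
  have hstQ : fs (moveB P) ≤ ft (moveB P) := by omega
  have h2fsQ : 2 * fs (moveB P) ≤ fa (moveB P) := by omega
  have hnm := ft_not_mem h0 (P := P)
  have hle := ft_le_fa h0 (P := P)
  have hpos := ft_pos hne h0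
  have hstair := stair_subset h0 (P := P)
  ext x
  rw [memA hQ0 hQne hstQ h2fsQ, hfs, hfa, memB h0 hne hts h2ft]
  constructor
  · rintro (⟨hQ, hne', hle'⟩ | ⟨h1, h2⟩)
    · rcases hQ with rfl | ⟨hP, _⟩ | ⟨ha, hb⟩
      · exact absurd rfl hne'
      · exact hP
      · omega
    · exact hstair (mem_Icc.2 (by omega))
  · intro hxP
    have hx1 := fs_le hxP
    have hx2 := le_fa hxP
    have hxne : x ≠ fa P - ft P := fun h => hnm (h ▸ hxP)
    by_cases hc : fa P - ft P < x
    · exact Or.inr (by omega)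
    · refine Or.inl ⟨Or.inr (Or.inl ⟨hxP, by omega⟩), by omega, by omega⟩

end Comp

noncomputable def phi (P : Finset ℕ) : Finset ℕ := if fs P ≤ ft P then moveA P else moveB P

section Phi

variable {j : ℕ} (hj : 1 ≤ j) (hP : P ∈ DD j) (hnp : ¬ pent P)

include hj hP in
lemma DD_nonempty : P.Nonempty := by
  rw [mem_DD] at hP
  rcases Finset.eq_empty_or_nonempty P with rfl | h
  · simp at hP; omega
  · exact h

include hj hP hnp in
lemma cardA_ge2 (hst : fs P ≤ ft P) : 2 ≤ P.card := by
  have h0 := (mem_DD.1 hP).2.1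
  have hne := DD_nonempty hj hP
  by_contra hc
  push_neg at hc
  have hcard : P.card = 1 := by
    have := Finset.card_pos.2 hne
    omega
  obtain ⟨x, hx⟩ := Finset.card_eq_one.1 hcard
  have hfs : fs P = x := fs_eq_of (by rw [hx]; exact mem_singleton_self x)
    (fun y hy => by rw [hx, mem_singleton] at hy; omega)
  have htle : ft P ≤ P.card := ft_le_card h0
  have htpos := ft_pos hne h0
  have hxpos : 1 ≤ x := pos_of_mem h0 (by rw [hx]; exact mem_singleton_self x)
  exact hnp ⟨by omega, Or.inl (by omega)⟩

include hj hP hnp in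
lemma phi_mem_DD : phi P ∈ DD j := by
  obtain ⟨hbd, h0, hsum⟩ := mem_DD.1 hP
  have hne := DD_nonempty hj hP
  have hfa_le : fa P ≤ j := by
    rw [← hsum]
    exact Finset.single_le_sum (f := fun x => x) (fun i _ => Nat.zero_le i) (fa_mem hne)
  rw [phi]
  split_ifs with hst
  · have h2fs := two_fs_le_fa h0 hne hst hnp
    have hc2 := cardA_ge2 hj hP hnp hst
    have hpair := pair_le_sum h0 hc2
    have hspos := pos_of_mem h0 (fs_mem hne)
    rw [mem_DD]
    refine ⟨?_, zeroA h0 hne hst h2fs, by rw [sumA h0 hne hst h2fs]; exact hsum⟩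
    intro x hx
    rw [memA h0 hne hst h2fs] at hx
    rcases hx with ⟨hxP, _, _⟩ | ⟨_, hxle⟩
    · exact hbd x hxP
    · omega
  · push_neg at hst
    have h2ft := fa_ge_two_ft h0 hne hst hnp
    rw [mem_DD]
    refine ⟨?_, zeroB h0 hne hst h2ft, by rw [sumB h0 hne hst h2ft]; exact hsum⟩
    intro x hx
    rw [memB h0 hne hst h2ft] at hx
    have hle := ft_le_fa h0 (P := P)
    rcases hx with rfl | ⟨hxP, _⟩ | ⟨_, hxle⟩
    · omega
    · exact hbd x hxP
    · omega

include hj hP hnp in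
lemma phi_not_pent : ¬ pent (phi P) := by
  obtain ⟨hbd, h0, hsum⟩ := mem_DD.1 hP
  have hne := DD_nonempty hj hP
  rw [phi]
  split_ifs with hst
  · exact pentA h0 hne hst (two_fs_le_fa h0 hne hst hnp)
  · push_neg at hst
    exact pentB h0 hne hst (fa_ge_two_ft h0 hne hst hnp)

include hj hP hnp in
lemma phi_card : (phi P).card + 1 = P.card ∨ P.card + 1 = (phi P).card := by
  obtain ⟨hbd, h0, hsum⟩ := mem_DD.1 hP
  have hne := DD_nonempty hj hP
  rw [phi]
  split_ifs with hst
  · exact Or.inl (cardA hne)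
  · push_neg at hst
    exact Or.inr (cardB h0 hne hst (fa_ge_two_ft h0 hne hst hnp)).symm

include hj hP hnp in
lemma phi_phi : phi (phi P) = P := by
  obtain ⟨hbd, h0, hsum⟩ := mem_DD.1 hP
  have hne := DD_nonempty hj hP
  by_cases hst : fs P ≤ ft P
  · have h2fs := two_fs_le_fa h0 hne hst hnp
    have hft := ftA h0 hne hst h2fs
    have hfs := fsA h0 hne hst h2fs
    have h1 : phi P = moveA P := by rw [phi, if_pos hst]
    rw [h1, phi, if_neg (by omega)]
    exact moveB_moveA h0 hne hst hnp
  · push_neg at hst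
    have h2ft := fa_ge_two_ft h0 hne hst hnp
    have hft := ftB h0 hne hst h2ft
    have hfs := fsB h0 hne hst h2ft
    have h1 : phi P = moveB P := by rw [phi, if_neg (by omega)]
    rw [h1, phi, if_pos (by omega)]
    exact moveA_moveB h0 hne hst hnp

end Phi

open scoped Classical in
lemma sum_nonpent {j : ℕ} (hj : 1 ≤ j) :
    ∑ P ∈ (DD j).filter (fun P => ¬ pent P), (-1:ℤ)^(P.card+1) = 0 := by
  classical
  refine Finset.sum_involution (fun P _ => phi P) ?_ ?_ ?_ ?_
  · intro P hP
    rw [mem_filter] at hP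
    rcases phi_card hj hP.1 hP.2 with h | h
    · rw [← h, pow_succ, pow_succ]; ring
    · rw [← h, pow_succ, pow_succ]; ring
  · intro P hP _
    rw [mem_filter] at hP
    show phi P ≠ P
    intro he
    rcases phi_card hj hP.1 hP.2 with h | h <;> rw [he] at h <;> omega
  · intro P hP
    rw [mem_filter] at hP ⊢
    exact ⟨phi_mem_DD hj hP.1 hP.2, phi_not_pent hj hP.1 hP.2⟩
  · intro P hP
    rw [mem_filter] at hP
    exact phi_phi hj hP.1 hP.2

section PentSum

lemma pent_classify {j : ℕ} {P : Finset ℕ} (hP : P ∈ DD j) (hj : 1 ≤ j) (hp : pent P) :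
    (fs P = ft P ∧ fa P = 2 * ft P - 1 ∧ P = Icc (ft P) (2 * ft P - 1) ∧ 2 * j = 3 * ft P ^ 2 - ft P)
    ∨ (fs P = ft P + 1 ∧ fa P = 2 * ft P ∧ P = Icc (ft P + 1) (2 * ft P) ∧ 2 * j = 3 * ft P ^ 2 + ft P) := by
  obtain ⟨hbd, h0, hsum⟩ := mem_DD.1 hP
  have hne := DD_nonempty hj hP
  obtain ⟨hint, hfs⟩ := pent_interval h0 hne hp
  have hle := ft_le_fa h0 (P := P)
  have hpos := ft_pos hne h0
  have hsle := fs_le_fa hne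
  have hspos := pos_of_mem h0 (fs_mem hne)
  have hs2 := sum_Icc_id_mul_two' hspos hsle
  rw [← hint, hsum] at hs2
  rcases hp.2 with h | h
  · left
    have hfa : fa P = 2 * ft P - 1 := by omega
    refine ⟨h, hfa, by rw [← hfa, ← h]; exact hint, ?_⟩
    have h1 : fs P + fa P = 3 * ft P - 1 := by omega
    have h2 : fa P + 1 - fs P = ft P := by omega
    rw [h1, h2, Nat.sub_mul, one_mul] at hs2
    have h3 : 3 * ft P ^ 2 = 3 * ft P * ft P := by ring
    rw [h3]
    generalize hA : 3 * ft P * ft P = A at hs2 ⊢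
    omega
  · right
    have hfa : fa P = 2 * ft P := by omega
    refine ⟨h, hfa, by rw [← hfa, ← h]; exact hint, ?_⟩
    have h1 : fs P + fa P = 3 * ft P + 1 := by omega
    have h2 : fa P + 1 - fs P = ft P := by omega
    rw [h1, h2, Nat.add_mul, one_mul] at hs2
    have h3 : 3 * ft P ^ 2 = 3 * ft P * ft P := by ring
    rw [h3]
    generalize hA : 3 * ft P * ft P = A at hs2 ⊢
    omega

lemma G_mem {j k : ℕ} (hk : 1 ≤ k) (h : 2 * j = 3 * k ^ 2 - k) :
    Icc k (2 * k - 1) ∈ DD j ∧ pent (Icc k (2 * k - 1)) ∧ ft (Icc k (2 * k - 1)) = k := by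
  obtain ⟨n, rfl⟩ : ∃ n, k = n + 1 := ⟨k - 1, by omega⟩
  set k := n + 1 with hkdef
  have h3 : 3 * k ^ 2 = 3 * k * k := by ring
  have hkk : k ≤ 3 * k * k := by nlinarith
  have h5 : 5 * k ≤ 3 * k * k + 2 := by nlinarith
  rw [h3] at h
  have hbd : 2 * (2 * k - 1) ≤ 2 * j := by
    generalize hA : 3 * k * k = A at h hkk h5
    omega
  have hbc : k ≤ 2 * k - 1 := by omega
  have hft : ft (Icc k (2 * k - 1)) = k := by
    rw [ft_of_eq_Icc hk hbc rfl]; omega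
  have hsum : ∑ x ∈ Icc k (2 * k - 1), x = j := by
    have hs2 := sum_Icc_id_mul_two' hk hbc
    have h1 : k + (2 * k - 1) = 3 * k - 1 := by omega
    have h2 : 2 * k - 1 + 1 - k = k := by omega
    rw [h1, h2, Nat.sub_mul, one_mul] at hs2
    generalize hA : 3 * k * k = A at h hkk hs2
    omega
  refine ⟨mem_DD.2 ⟨fun x hx => ?_, by rw [mem_Icc]; omega, hsum⟩, ?_, hft⟩
  · rw [mem_Icc] at hx; omega
  · constructor
    · rw [hft, Nat.card_Icc]; omega
    · left
      rw [hft, fs_of_eq_Icc hbc rfl]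

lemma H_mem {j k : ℕ} (hk : 1 ≤ k) (h : 2 * j = 3 * k ^ 2 + k) :
    Icc (k + 1) (2 * k) ∈ DD j ∧ pent (Icc (k + 1) (2 * k)) ∧ ft (Icc (k + 1) (2 * k)) = k := by
  obtain ⟨n, rfl⟩ : ∃ n, k = n + 1 := ⟨k - 1, by omega⟩
  set k := n + 1 with hkdef
  have h3 : 3 * k ^ 2 = 3 * k * k := by ring
  have hkk : 3 * k ≤ 3 * k * k := by nlinarith
  rw [h3] at h
  have hbd : 2 * (2 * k) ≤ 2 * j := by
    generalize hA : 3 * k * k = A at h hkk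
    omega
  have hbc : k + 1 ≤ 2 * k := by omega
  have hft : ft (Icc (k + 1) (2 * k)) = k := by
    rw [ft_of_eq_Icc (by omega) hbc rfl]; omega
  have hsum : ∑ x ∈ Icc (k + 1) (2 * k), x = j := by
    have hs2 := sum_Icc_id_mul_two' (by omega) hbc
    have h1 : k + 1 + 2 * k = 3 * k + 1 := by omega
    have h2 : 2 * k + 1 - (k + 1) = k := by omega
    rw [h1, h2, Nat.add_mul, one_mul] at hs2
    generalize hA : 3 * k * k = A at h hkk hs2
    omega
  refine ⟨mem_DD.2 ⟨fun x hx => ?_, by rw [mem_Icc]; omega, hsum⟩, ?_, hft⟩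
  · rw [mem_Icc] at hx; omega
  · constructor
    · rw [hft, Nat.card_Icc]; omega
    · right
      rw [hft, fs_of_eq_Icc hbc rfl]

noncomputable def gk (j k : ℕ) : Finset ℕ :=
  if 2 * j = 3 * k ^ 2 - k then Icc k (2 * k - 1) else Icc (k + 1) (2 * k)

open scoped Classical in
lemma sum_pent {j : ℕ} (hj : 1 ≤ j) :
    ∑ P ∈ (DD j).filter pent, (-1:ℤ)^(P.card+1) = e j := by
  classical
  rw [e, ← Finset.sum_filter]
  refine Finset.sum_nbij' (i := ft) (j := gk j) ?_ ?_ ?_ ?_ ?_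
  · -- maps into filtered range
    intro P hP
    rw [mem_filter] at hP
    obtain ⟨hPD, hpp⟩ := hP
    obtain ⟨hbd, h0, hsum⟩ := mem_DD.1 hPD
    have hne := DD_nonempty hj hPD
    have hle := ft_le_fa h0 (P := P)
    have hfa_le : fa P ≤ j := by
      rw [← hsum]
      exact Finset.single_le_sum (f := fun x => x) (fun i _ => Nat.zero_le i) (fa_mem hne)
    show ft P ∈ _
    rw [mem_filter, mem_range]
    have hkj : ft P ≤ j := hle.trans hfa_le
    rcases pent_classify hPD hj hpp with ⟨_, _, _, h⟩ | ⟨_, _, _, h⟩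
    · exact ⟨by omega, Or.inl h⟩
    · exact ⟨by omega, Or.inr h⟩
  · -- maps back
    intro k hk
    rw [mem_filter, mem_range] at hk
    obtain ⟨hkr, hcond⟩ := hk
    have hk1 : 1 ≤ k := by
      rcases Nat.eq_zero_or_pos k with rfl | h
      · simp at hcond; omega
      · exact h
    show gk j k ∈ _
    rw [mem_filter, gk]
    split_ifs with hcase
    · obtain ⟨h1, h2, _⟩ := G_mem hk1 hcase
      exact ⟨h1, h2⟩
    · have hcond' : 2 * j = 3 * k ^ 2 + k := by tauto
      obtain ⟨h1, h2, _⟩ := H_mem hk1 hcond'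
      exact ⟨h1, h2⟩
  · -- left inverse
    intro P hP
    rw [mem_filter] at hP
    obtain ⟨hPD, hpp⟩ := hP
    show gk j (ft P) = P
    rcases pent_classify hPD hj hpp with ⟨_, _, hPeq, h⟩ | ⟨_, _, hPeq, h⟩
    · rw [gk, if_pos h]
      exact hPeq.symm
    · have hpos := ft_pos (DD_nonempty hj hPD) (mem_DD.1 hPD).2.1
      rw [gk, if_neg ?_]
      · exact hPeq.symm
      · intro hc
        generalize hA : 3 * ft P ^ 2 = A at h hc
        omega
  · -- right inverse
    intro k hk
    rw [mem_filter, mem_range] at hk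
    obtain ⟨hkr, hcond⟩ := hk
    have hk1 : 1 ≤ k := by
      rcases Nat.eq_zero_or_pos k with rfl | h
      · simp at hcond; omega
      · exact h
    show ft (gk j k) = k
    rw [gk]
    split_ifs with hcase
    · exact (G_mem hk1 hcase).2.2
    · have hcond' : 2 * j = 3 * k ^ 2 + k := by tauto
      exact (H_mem hk1 hcond').2.2
  · -- values agree
    intro P hP
    rw [mem_filter] at hP
    obtain ⟨hPD, hpp⟩ := hP
    show _ = (-1:ℤ)^(ft P + 1)
    rw [hpp.1]

open scoped Classical in
lemma key {j : ℕ} (hj : 1 ≤ j) : ∑ P ∈ DD j, (-1:ℤ)^(P.card+1) = e j := by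
  classical
  rw [← Finset.sum_filter_add_sum_filter_not (DD j) pent, sum_pent hj, sum_nonpent hj, add_zero]

end PentSum

section Final

lemma card_filter_eq_natCard {s : Finset (Finset ℕ)} {p : Finset ℕ → Prop} [DecidablePred p] :
    (s.filter p).card = Nat.card {A : Finset ℕ // A ∈ s ∧ p A} := by
  rw [← Nat.card_eq_finsetCard]
  exact Nat.card_congr (Equiv.subtypeEquivRight (fun A => by simp [mem_filter]))

lemma count_eq (j : ℕ) (q : ℕ → Prop) :
    Nat.card {P : Nat.Partition j //
      P.parts.Nodup ∧ (∀ x ∈ P.parts, 2 ≤ x) ∧ q (Multiset.card P.parts)}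
    = Nat.card {A : Finset ℕ // A ∈ DD j ∧ 1 ∉ A ∧ q A.card} := by
  refine Nat.card_congr ⟨fun P => ⟨⟨P.1.parts, P.2.1⟩, ?_⟩,
    fun A => ⟨⟨A.1.val, ?_, ?_⟩, ?_, ?_, ?_⟩, ?_, ?_⟩
  · obtain ⟨⟨parts, hpos, hsum⟩, hnd, h2, hq⟩ := P
    rw [mem_DD]
    have hsum' : ∑ x ∈ (⟨parts, hnd⟩ : Finset ℕ), x = j := by
      rw [Finset.sum_eq_multiset_sum]
      simpa using hsum
    refine ⟨⟨fun x hx => ?_, fun hx => ?_, hsum'⟩, fun hx => ?_, hq⟩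
    · show x ≤ j
      rw [← hsum']
      exact Finset.single_le_sum (f := fun x => x) (fun i _ => Nat.zero_le i) hx
    · exact absurd (hpos hx) (by omega)
    · exact absurd (h2 1 hx) (by omega)
  · -- parts_pos
    intro i hi
    have := (mem_DD.1 A.2.1).2.1
    rcases Nat.eq_zero_or_pos i with rfl | h
    · exact absurd hi this
    · exact h
  · -- parts_sum
    have h2 := (mem_DD.1 A.2.1).2.2
    rw [Finset.sum_eq_multiset_sum] at h2
    simpa using h2
  · exact A.1.nodup
  · -- 2 ≤ x
    intro x hx
    have h0 := (mem_DD.1 A.2.1).2.1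
    have h1 := A.2.2.1
    have hx0 : x ≠ 0 := fun h => h0 (h ▸ hx)
    have hx1 : x ≠ 1 := fun h => h1 (h ▸ hx)
    omega
  · exact A.2.2.2
  · intro P; rfl
  · intro A; rfl

open scoped Classical

lemma signed_sum (j : ℕ) :
    ∑ P ∈ (DD j).filter (fun A => 1 ∉ A), (-1:ℤ)^(P.card+1) = (O2 j : ℤ) - E2 j := by
  classical
  rw [← Finset.sum_filter_add_sum_filter_not ((DD j).filter (fun A => 1 ∉ A))
    (fun A => Odd A.card), Finset.filter_filter, Finset.filter_filter]
  have hodd : ∀ P ∈ (DD j).filter (fun A => 1 ∉ A ∧ Odd A.card),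
      (-1:ℤ)^(P.card+1) = 1 := by
    intro P hP
    have h := (mem_filter.1 hP).2.2
    exact Even.neg_one_pow (by rcases h with ⟨m, hm⟩; exact ⟨m + 1, by omega⟩)
  have heven : ∀ P ∈ (DD j).filter (fun A => 1 ∉ A ∧ ¬ Odd A.card),
      (-1:ℤ)^(P.card+1) = -1 := by
    intro P hP
    have h := (mem_filter.1 hP).2.2
    rw [Nat.not_odd_iff_even] at h
    exact Odd.neg_one_pow (by rcases h with ⟨m, hm⟩; exact ⟨m, by omega⟩)
  rw [Finset.sum_congr rfl hodd, Finset.sum_congr rfl heven]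
  have hthis : (DD j).filter (fun A => 1 ∉ A ∧ ¬ Odd A.card)
      = (DD j).filter (fun A => 1 ∉ A ∧ Even A.card) := by
    apply Finset.filter_congr
    intro A _
    simp [Nat.not_odd_iff_even]
  rw [hthis]
  simp only [Finset.sum_const, nsmul_eq_mul, mul_one, mul_neg]
  rw [card_filter_eq_natCard, card_filter_eq_natCard, O2, E2,
    count_eq j (fun n => Odd n), count_eq j (fun n => Even n)]
  ring
lemma one_mem_sum (j : ℕ) (hj : 2 ≤ j) :
    ∑ P ∈ (DD j).filter (fun A => 1 ∈ A), (-1:ℤ)^(P.card+1)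
    = -((O2 (j-1) : ℤ) - E2 (j-1)) := by
  rw [← signed_sum (j-1), ← Finset.sum_neg_distrib]
  refine Finset.sum_nbij' (i := fun P => P.erase 1) (j := fun A => insert 1 A) ?_ ?_ ?_ ?_ ?_
  · intro P hP
    rw [mem_filter] at hP
    obtain ⟨hPD, h1P⟩ := hP
    obtain ⟨hbd, h0, hsum⟩ := mem_DD.1 hPD
    show P.erase 1 ∈ _
    rw [mem_filter, mem_DD]
    have hsum' : 1 + ∑ x ∈ P.erase 1, x = j := by
      have h2 := Finset.add_sum_erase P (fun x => x) h1P
      omega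
    refine ⟨⟨?_, fun hx => h0 (Finset.mem_of_mem_erase hx), by omega⟩,
      Finset.notMem_erase 1 P⟩
    intro x hx
    have hxP := Finset.mem_of_mem_erase hx
    have hxne := Finset.ne_of_mem_erase hx
    have hpair : 1 + x ≤ j := by
      rw [← hsum]
      calc 1 + x = ∑ y ∈ ({1, x} : Finset ℕ), y := by rw [Finset.sum_pair (Ne.symm hxne)]
        _ ≤ ∑ y ∈ P, y := Finset.sum_le_sum_of_subset (by
            intro y hy
            simp only [mem_insert, mem_singleton] at hy
            rcases hy with rfl | rfl
            · exact h1P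
            · exact hxP)
    omega
  · intro A hA
    rw [mem_filter] at hA
    obtain ⟨hAD, h1A⟩ := hA
    obtain ⟨hbd, h0, hsum⟩ := mem_DD.1 hAD
    show insert 1 A ∈ _
    rw [mem_filter, mem_DD]
    refine ⟨⟨?_, ?_, ?_⟩, mem_insert_self 1 A⟩
    · intro x hx
      rcases mem_insert.1 hx with rfl | hx
      · omega
      · have := hbd x hx; omega
    · intro hx
      rcases mem_insert.1 hx with h | h
      · omega
      · exact h0 h
    · rw [Finset.sum_insert h1A, hsum]; omega
  · intro P hP
    exact Finset.insert_erase (mem_filter.1 hP).2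
  · intro A hA
    exact Finset.erase_insert (mem_filter.1 hA).2
  · intro P hP
    rw [mem_filter] at hP
    have h1P := hP.2
    have hcard : (P.erase 1).card + 1 = P.card := Finset.card_erase_add_one h1P
    rw [← hcard, pow_succ, pow_succ]
    ring

end Final

end Franklin

theorem odd_even_diff_eq_e (j : ℕ) (hj : 2 ≤ j) :
    ((O2 j : ℤ) - E2 j) - ((O2 (j - 1) : ℤ) - E2 (j - 1)) = e j := by
  classical
  have hkey := Franklin.key (j := j) (by omega)
  rw [← Finset.sum_filter_add_sum_filter_not (Franklin.DD j) (fun A => 1 ∉ A)] at hkey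
  have hflip : (Franklin.DD j).filter (fun A => ¬ 1 ∉ A)
      = (Franklin.DD j).filter (fun A => 1 ∈ A) := by
    apply Finset.filter_congr
    intro A _
    simp
  rw [hflip, Franklin.signed_sum j, Franklin.one_mem_sum j hj] at hkey
  linarith
end
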